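/- arXiv:2306.16983 — 5 statements merged into one kernel-verified Lean document; each statement's English description precedes it below -/
import Mathlib

section
/- Let K be a number field of degree n = [K:ℚ]. There exists a constant C > 1 such that for every nonzero fractional ideal 𝔞 of K there is a ℤ-basis x_1,…,x_n of 𝔞 with the property that the associated ℓ∞-norm ‖·‖_∞ on 𝔞⊗ℝ satisfies (1/C)·N(𝔞)^{1/n}·‖v‖_∞ ≤ ‖v‖_can ≤ C·N(𝔞)^{1/n}·‖v‖_∞ for all v ∈ 𝔞⊗ℝ. -/
/-!
STATEMENT 5: Existence of norm-length compatible bases.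

Let `K` be a number field of degree `n = [K:ℚ]`. There exists a constant `C > 1` such that for
every nonzero fractional ideal `𝔞` of `K` there is a `ℤ`-basis `x_1, …, x_n` of `𝔞` with the
property that the associated `ℓ∞`-norm on `𝔞 ⊗ ℝ` satisfies
`(1/C)·N(𝔞)^{1/n}·‖v‖_∞ ≤ ‖v‖_can ≤ C·N(𝔞)^{1/n}·‖v‖_∞` for all `v ∈ 𝔞 ⊗ ℝ`.

A vector `v ∈ 𝔞 ⊗ ℝ` is described by its (arbitrary real) coordinates `c : Fin n → ℝ` in the
chosen basis; its canonical norm is `max_{σ : K ↪ ℂ} |∑ i, c i • σ (x i)|` (the `ℝ`-linear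
extension of the embeddings to `𝔞 ⊗ ℝ = K ⊗ ℝ`).
-/

open NumberField
open scoped Classical

noncomputable section

variable (K : Type) [Field K] [NumberField K]

/-- The monoid of fractional ideals of `K`. -/
abbrev FracIdl := FractionalIdeal (nonZeroDivisors (𝓞 K)) K

/-- The underlying `ℤ`-lattice of a fractional ideal. -/
def latticeOf (a : FracIdl K) : Submodule ℤ K :=
  Submodule.restrictScalars ℤ (a : Submodule (𝓞 K) K)

/-- The canonical norm `‖·‖_can = max_{σ : K ↪ ℂ} |σ(·)|` of the vector of `𝔞 ⊗ ℝ` whose real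
coordinates in the basis `bv` are `c`. -/
noncomputable def canCoordNorm {n : ℕ} (bv : Fin n → K) (c : Fin n → ℝ) : ℝ :=
  ⨆ σ : K →+* ℂ, ‖∑ i, (c i : ℂ) * σ (bv i)‖

/-- Norm–length compatibility, with coefficient `C`, of a `ℤ`-basis `b` of the fractional
ideal `𝔞`: for every vector of `𝔞 ⊗ ℝ` (described by its real coordinates `c`), the canonical
norm is within a factor `C` of `N(𝔞)^{1/n}` times the `ℓ∞`-norm `⨆ i, |c i|`. -/
def IsNLCBasis (a : FracIdl K) (C : ℝ) {n : ℕ}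
    (b : Module.Basis (Fin n) ℤ (latticeOf K a)) : Prop :=
  ∀ c : Fin n → ℝ,
    (1 / C) * (FractionalIdeal.absNorm a : ℝ) ^ ((n : ℝ)⁻¹) * (⨆ i, |c i|) ≤
        canCoordNorm K (fun i => ((b i : K))) c ∧
      canCoordNorm K (fun i => ((b i : K))) c ≤
        C * (FractionalIdeal.absNorm a : ℝ) ^ ((n : ℝ)⁻¹) * (⨆ i, |c i|)

/-!
By Minkowski's theorem every nonzero fractional ideal `𝔞` contains some `x ≠ 0` with
`|σ x| ≪ N(𝔞)^{1/n}` for all embeddings `σ`. The product formula `∏ σ, |σ x| = |N(x)|` then makes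
every `|σ x|` comparable to `|N(x)|^{1/n}`, and `𝔞 = x · J⁻¹` for an integral ideal `J` of bounded
norm. Only finitely many `J` occur; for each of them any `ℤ`-basis of `J⁻¹` works with some
constant, because the canonical embedding of a `ℚ`-basis of `K` is `ℝ`-linearly independent and
all norms on `ℝⁿ` are equivalent. Multiplying that basis by `x` rescales the canonical norm by
about `|N(x)|^{1/n} = (N(𝔞) / N(J⁻¹))^{1/n}`, which transports the estimate to `𝔞`.
-/

open Module FractionalIdeal Filter
open scoped NNReal

theorem pi_norm_eq_iSup_norm {ι : Type*} [Fintype ι] {E : ι → Type*}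
    [∀ i, SeminormedAddGroup (E i)] (f : ∀ i, E i) : ‖f‖ = ⨆ i, ‖f i‖ :=
  le_antisymm
    ((pi_norm_le_iff_of_nonneg (Real.iSup_nonneg fun _ => norm_nonneg _)).2
      fun i => le_ciSup (f := fun i => ‖f i‖) (Set.finite_range _).bddAbove i)
    (Real.iSup_le (norm_le_pi_norm f) (norm_nonneg f))

theorem iSup_abs_eq_norm {ι : Type*} [Fintype ι] (c : ι → ℝ) : ⨆ i, |c i| = ‖c‖ := by
  simp [pi_norm_eq_iSup_norm]

theorem LinearIndependent.exists_norm_le_and_norm_sum_smul_le {𝕜 ι E : Type*}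
    [NontriviallyNormedField 𝕜] [CompleteSpace 𝕜] [Fintype ι]
    [NormedAddCommGroup E] [NormedSpace 𝕜 E] {v : ι → E} (hv : LinearIndependent 𝕜 v) :
    ∃ A > 0, ∀ c : ι → 𝕜, ‖c‖ ≤ A * ‖∑ i, c i • v i‖ ∧ ‖∑ i, c i • v i‖ ≤ A * ‖c‖ := by
  let L := Fintype.linearCombination 𝕜 v
  obtain ⟨A, hA, hL⟩ :=
    L.injective_iff_antilipschitz.1 (linearIndependent_iff_injective_fintypeLinearCombination.1 hv)
  let L' := LinearMap.toContinuousLinearMap L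
  refine ⟨max (A : ℝ) ‖L'‖, lt_max_of_lt_left hA, fun c => ⟨?_, ?_⟩⟩
  · calc ‖c‖ ≤ A * ‖L c‖ := ZeroHomClass.bound_of_antilipschitz L hL c
      _ ≤ max (A : ℝ) ‖L'‖ * ‖∑ i, c i • v i‖ := by
        rw [Fintype.linearCombination_apply]; gcongr; exact le_max_left _ _
  · calc ‖∑ i, c i • v i‖ = ‖L' c‖ := by simp [L', L, Fintype.linearCombination_apply]
      _ ≤ ‖L'‖ * ‖c‖ := L'.le_opNorm c
      _ ≤ max (A : ℝ) ‖L'‖ * ‖c‖ := by gcongr; exact le_max_right _ _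

open scoped nonZeroDivisors in
theorem FractionalIdeal.exists_coeIdeal_mul_eq_spanSingleton {R L : Type*} [CommRing R]
    [IsDedekindDomain R] [Field L] [Algebra R L] [IsFractionRing R L]
    {a : FractionalIdeal R⁰ L} (ha : a ≠ 0) {x : L} (hxa : x ∈ a) :
    ∃ J : Ideal R, (J : FractionalIdeal R⁰ L) * a = spanSingleton R⁰ x := by
  obtain ⟨J, hJ⟩ := le_one_iff_exists_coeIdeal.1 <|
    (mul_inv_cancel₀ ha).subst (motive := (spanSingleton R⁰ x * a⁻¹ ≤ ·))
      (mul_le_mul_left (spanSingleton_le_iff_mem.2 hxa) _)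
  exact ⟨J, by rw [hJ, mul_assoc, inv_mul_cancel₀ ha, mul_one]⟩

section

variable {K}

theorem absNorm_pos {a : FracIdl K} (ha : a ≠ 0) : 0 < (absNorm a : ℝ) := by
  exact_mod_cast (absNorm_nonneg a).lt_of_ne' (absNorm_eq_zero_iff.not.2 ha)

theorem abs_norm_pos {x : K} (hx : x ≠ 0) : 0 < |(Algebra.norm ℚ x : ℝ)| := by
  simpa [Algebra.norm_eq_zero_iff] using hx

theorem prod_norm_embeddings_eq_abs_norm (x : K) :
    ∏ σ : K →+* ℂ, ‖σ x‖ = |(Algebra.norm ℚ x : ℝ)| := by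
  rw [← Complex.norm_ratCast, ← eq_ratCast (algebraMap ℚ ℂ),
    Algebra.norm_eq_prod_embeddings ℚ ℂ, norm_prod]
  exact Fintype.prod_equiv (RingHom.equivRatAlgHom K ℂ) _ _ fun _ => rfl

theorem abs_norm_le_norm_canonicalEmbedding_pow (x : K) :
    |(Algebra.norm ℚ x : ℝ)| ≤ ‖canonicalEmbedding K x‖ ^ finrank ℚ K := by
  rw [← prod_norm_embeddings_eq_abs_norm, ← Embeddings.card K ℂ, ← Finset.card_univ,
    ← Finset.prod_const]
  gcongr with σ
  exact norm_le_pi_norm (canonicalEmbedding K x) σ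

theorem canCoordNorm_eq_norm {n : ℕ} (bv : Fin n → K) (c : Fin n → ℝ) :
    canCoordNorm K bv c = ‖∑ i, c i • canonicalEmbedding K (bv i)‖ := by
  simp [canCoordNorm, pi_norm_eq_iSup_norm, Finset.sum_apply, Complex.real_smul,
    canonicalEmbedding.apply_at]

theorem canCoordNorm_nonneg {n : ℕ} (bv : Fin n → K) (c : Fin n → ℝ) :
    0 ≤ canCoordNorm K bv c :=
  (canCoordNorm_eq_norm bv c).symm ▸ norm_nonneg _

theorem canCoordNorm_mul_left_le {n : ℕ} (x : K) (bv : Fin n → K) (c : Fin n → ℝ) :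
    canCoordNorm K (fun i => x * bv i) c ≤
      ‖canonicalEmbedding K x‖ * canCoordNorm K bv c := by
  simp only [canCoordNorm_eq_norm, map_mul, ← mul_smul_comm, ← Finset.mul_sum]
  exact norm_mul_le _ _

theorem canCoordNorm_le_mul_left {n : ℕ} {x : K} (hx : x ≠ 0) (bv : Fin n → K)
    (c : Fin n → ℝ) :
    canCoordNorm K bv c ≤
      ‖canonicalEmbedding K x⁻¹‖ * canCoordNorm K (fun i => x * bv i) c := by
  simpa [inv_mul_cancel_left₀ hx] using canCoordNorm_mul_left_le x⁻¹ (fun i => x * bv i) c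

theorem linearIndependent_canonicalEmbedding_basisOfFractionalIdeal (I : (FracIdl K)ˣ) :
    LinearIndependent ℝ (canonicalEmbedding K ∘ basisOfFractionalIdeal K I) := by
  refine LinearIndependent.of_comp (mixedEmbedding.commMap K) ?_
  convert (mixedEmbedding.fractionalIdealLatticeBasis K I).linearIndependent using 1
  ext1 i
  simp [mixedEmbedding.commMap_canonical_eq_mixed]

theorem exists_basis_latticeOf_linearIndependent {c : FracIdl K} (hc : c ≠ 0) :
    ∃ b : Basis (Fin (finrank ℚ K)) ℤ (latticeOf K c),
      LinearIndependent ℝ fun i => canonicalEmbedding K (b i) := by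
  let I := Units.mk0 c hc
  have hcard : Fintype.card (Free.ChooseBasisIndex ℤ I) = finrank ℚ K := by
    rw [← finrank_eq_card_chooseBasisIndex, fractionalIdeal_rank, RingOfIntegers.rank]
  let e := Fintype.equivFinOfCardEq hcard
  let E : latticeOf K c ≃ₗ[ℤ] ((I : FracIdl K) : Submodule (𝓞 K) K) :=
    (Submodule.restrictScalarsEquiv ℤ (𝓞 K) K _).restrictScalars ℤ
  refine ⟨((fractionalIdealBasis K I).reindex e).map E.symm, ?_⟩
  convert (linearIndependent_canonicalEmbedding_basisOfFractionalIdeal I).comp e.symm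
    e.symm.injective using 1
  ext1 i
  simp only [Function.comp_apply, basisOfFractionalIdeal_apply, Basis.map_apply,
    Basis.coe_reindex]
  rfl

theorem exists_basis_latticeOf_spanSingleton_mul {ι : Type*} {c : FracIdl K} {x : K}
    (hx : x ≠ 0) (b : Basis ι ℤ (latticeOf K c)) :
    ∃ b' : Basis ι ℤ (latticeOf K (spanSingleton _ x * c)), ∀ i, (b' i : K) = x * b i := by
  have hmap : (latticeOf K c).map (LinearMap.mulLeft ℤ x) =
      latticeOf K (spanSingleton _ x * c) := by
    ext z
    simp only [latticeOf, Submodule.mem_map, Submodule.restrictScalars_mem, mem_coe,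
      LinearMap.mulLeft_apply, mem_singleton_mul]
    exact exists_congr fun _ => and_congr_right fun _ => eq_comm
  let E := (Submodule.equivMapOfInjective _ (mul_right_injective₀ hx) (latticeOf K c)).trans
    (LinearEquiv.ofEq _ _ hmap)
  exact ⟨b.map E, fun i => rfl⟩

theorem IsNLCBasis.mono {a : FracIdl K} {C C' : ℝ} {n : ℕ}
    {b : Basis (Fin n) ℤ (latticeOf K a)} (hb : IsNLCBasis K a C b) (hC : 0 < C)
    (hCC' : C ≤ C') : IsNLCBasis K a C' b := by
  intro c
  have hs : 0 ≤ (absNorm a : ℝ) ^ ((n : ℝ)⁻¹) * ⨆ i, |c i| :=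
    mul_nonneg (Real.rpow_nonneg (by exact_mod_cast absNorm_nonneg a) _)
      (Real.iSup_nonneg fun i => abs_nonneg (c i))
  obtain ⟨hlow, hup⟩ := hb c
  simp only [mul_assoc] at hlow hup ⊢
  exact ⟨le_trans (by gcongr) hlow, hup.trans (by gcongr)⟩

theorem exists_isNLCBasis {c : FracIdl K} (hc : c ≠ 0) :
    ∃ C > 0, ∃ b : Basis (Fin (finrank ℚ K)) ℤ (latticeOf K c), IsNLCBasis K c C b := by
  obtain ⟨b, hb⟩ := exists_basis_latticeOf_linearIndependent hc
  obtain ⟨A, hA, hAb⟩ := hb.exists_norm_le_and_norm_sum_smul_le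
  set r := (absNorm c : ℝ) ^ ((finrank ℚ K : ℝ)⁻¹)
  have hr : 0 < r := Real.rpow_pos_of_pos (absNorm_pos hc) _
  refine ⟨A * (r + r⁻¹), by positivity, b, fun v => ?_⟩
  rw [canCoordNorm_eq_norm, iSup_abs_eq_norm]
  obtain ⟨hlow, hup⟩ := hAb v
  have hrr : (r + r⁻¹) * r = r ^ 2 + 1 := by field_simp
  constructor
  · calc 1 / (A * (r + r⁻¹)) * r * ‖v‖ = r ^ 2 / (r ^ 2 + 1) * (‖v‖ / A) := by
          rw [← hrr]; field_simp
      _ ≤ 1 * (‖v‖ / A) := by gcongr; exact div_le_one_of_le₀ (by linarith) (by positivity)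
      _ ≤ _ := by rw [one_mul, div_le_iff₀ hA]; linarith
  · calc _ ≤ A * ‖v‖ := hup
      _ ≤ A * ‖v‖ * (r ^ 2 + 1) := le_mul_of_one_le_right (by positivity) (by nlinarith)
      _ = A * (r + r⁻¹) * r * ‖v‖ := by rw [← hrr]; ring

theorem eventually_exists_isNLCBasis {c : FracIdl K} (hc : c ≠ 0) :
    ∀ᶠ C in atTop, ∃ b : Basis (Fin (finrank ℚ K)) ℤ (latticeOf K c), IsNLCBasis K c C b := by
  obtain ⟨C, hC, b, hb⟩ := exists_isNLCBasis hc
  exact (eventually_ge_atTop C).mono fun _ hC' => ⟨b, hb.mono hC hC'⟩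

variable (K) in
/-- Together with `IsBalanced K D x⁻¹`, this says that every `|σ x|` is within a factor `D` of
the geometric mean `|N(x)|^{1/n}` of all of them. -/
def IsBalanced (D : ℝ) (x : K) : Prop :=
  ‖canonicalEmbedding K x‖ ≤ D * |(Algebra.norm ℚ x : ℝ)| ^ (finrank ℚ K : ℝ)⁻¹

theorem IsBalanced.mono {D D' : ℝ} {x : K} (hx : IsBalanced K D x) (hD : D ≤ D') :
    IsBalanced K D' x :=
  hx.trans (by gcongr)

theorem IsBalanced.inv {D : ℝ} {x : K} (hx : IsBalanced K D x) (hx0 : x ≠ 0) :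
    IsBalanced K (D ^ (finrank ℚ K - 1)) x⁻¹ := by
  set n := finrank ℚ K
  set ρ := |(Algebra.norm ℚ x : ℝ)| ^ (n : ℝ)⁻¹
  have hρ : 0 < ρ := Real.rpow_pos_of_pos (abs_norm_pos hx0) _
  have hρn : ρ ^ n = |(Algebra.norm ℚ x : ℝ)| :=
    Real.rpow_inv_natCast_pow (abs_nonneg _) finrank_pos.ne'
  have hσ (σ : K →+* ℂ) : ‖σ x‖ ≤ D * ρ := (norm_le_pi_norm (canonicalEmbedding K x) σ).trans hx
  rw [IsBalanced, Algebra.norm_inv, Rat.cast_inv, abs_inv, Real.inv_rpow (abs_nonneg _),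
    canonicalEmbedding.norm_le_iff]
  intro σ
  have hprod : ρ * ρ ^ (n - 1) ≤ D ^ (n - 1) * ‖σ x‖ * ρ ^ (n - 1) := calc
    ρ * ρ ^ (n - 1) = ‖σ x‖ * ∏ τ ∈ Finset.univ.erase σ, ‖τ x‖ := by
      rw [← pow_succ', Nat.sub_add_cancel finrank_pos, hρn, ← prod_norm_embeddings_eq_abs_norm]
      exact (Finset.mul_prod_erase _ (fun τ => ‖τ x‖) (Finset.mem_univ σ)).symm
    _ ≤ ‖σ x‖ * ∏ τ ∈ Finset.univ.erase σ, D * ρ := by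
      gcongr with τ; exact hσ τ
    _ = D ^ (n - 1) * ‖σ x‖ * ρ ^ (n - 1) := by
      rw [Finset.prod_const, Finset.card_erase_of_mem (Finset.mem_univ σ), Finset.card_univ,
        Embeddings.card, mul_pow]
      ring
  have hσ0 : 0 < ‖σ x‖ := norm_pos_iff.2 ((map_ne_zero σ).2 hx0)
  rw [map_inv₀, norm_inv, inv_le_iff_one_le_mul₀ hσ0, mul_right_comm, le_mul_inv_iff₀ hρ, one_mul]
  exact le_of_mul_le_mul_right hprod (pow_pos hρ _)

theorem IsNLCBasis.exists_spanSingleton_mul {c : FracIdl K} {A D : ℝ}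
    {b : Basis (Fin (finrank ℚ K)) ℤ (latticeOf K c)} (hb : IsNLCBasis K c A b) {x : K}
    (hx0 : x ≠ 0) (hx : IsBalanced K D x) (hx' : IsBalanced K D x⁻¹) :
    ∃ b' : Basis (Fin (finrank ℚ K)) ℤ (latticeOf K (spanSingleton _ x * c)),
      IsNLCBasis K (spanSingleton _ x * c) (A * D) b' := by
  obtain ⟨b', hb'⟩ := exists_basis_latticeOf_spanSingleton_mul hx0 b
  refine ⟨b', fun v => ?_⟩
  set ρ := |(Algebra.norm ℚ x : ℝ)| ^ (finrank ℚ K : ℝ)⁻¹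
  have hρ : 0 < ρ := Real.rpow_pos_of_pos (abs_norm_pos hx0) _
  have hnorm : (absNorm (spanSingleton _ x * c) : ℝ) ^ (finrank ℚ K : ℝ)⁻¹ =
      ρ * (absNorm c : ℝ) ^ (finrank ℚ K : ℝ)⁻¹ := by
    rw [map_mul, absNorm_span_singleton, Rat.cast_mul, Rat.cast_abs,
      Real.mul_rpow (abs_nonneg _) (by exact_mod_cast absNorm_nonneg c)]
  rw [IsBalanced, Algebra.norm_inv, Rat.cast_inv, abs_inv, Real.inv_rpow (abs_nonneg _)] at hx'
  have hD : 0 < D :=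
    pos_of_mul_pos_left ((norm_pos_iff.2 ((_root_.map_ne_zero _).2 hx0)).trans_le hx) hρ.le
  have hbx : (fun i => (b' i : K)) = fun i => x * b i := funext hb'
  rw [hnorm, hbx]
  obtain ⟨hlow, hup⟩ := hb v
  constructor
  · calc 1 / (A * D) * (ρ * (absNorm c : ℝ) ^ (finrank ℚ K : ℝ)⁻¹) * (⨆ i, |v i|)
        = ρ / D * (1 / A * (absNorm c : ℝ) ^ (finrank ℚ K : ℝ)⁻¹ * (⨆ i, |v i|)) := by ring
      _ ≤ ρ / D * canCoordNorm K (fun i => (b i : K)) v := by gcongr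
      _ ≤ ρ / D * (‖canonicalEmbedding K x⁻¹‖ * canCoordNorm K (fun i => x * b i) v) := by
        gcongr; exact canCoordNorm_le_mul_left hx0 _ v
      _ ≤ ρ / D * (D * ρ⁻¹ * canCoordNorm K (fun i => x * b i) v) := by
        gcongr
        exact canCoordNorm_nonneg _ v
      _ = canCoordNorm K (fun i => x * b i) v := by field_simp
  · calc canCoordNorm K (fun i => x * b i) v
        ≤ ‖canonicalEmbedding K x‖ * canCoordNorm K (fun i => (b i : K)) v :=
          canCoordNorm_mul_left_le x _ v
      _ ≤ D * ρ * (A * (absNorm c : ℝ) ^ (finrank ℚ K : ℝ)⁻¹ * (⨆ i, |v i|)) := by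
        gcongr
        exacts [canCoordNorm_nonneg _ v, hx]
      _ = A * D * (ρ * (absNorm c : ℝ) ^ (finrank ℚ K : ℝ)⁻¹) * (⨆ i, |v i|) := by ring

open mixedEmbedding in
theorem minkowskiBound_eq_absNorm_mul (I : (FracIdl K)ˣ) :
    minkowskiBound K I = ENNReal.ofReal (absNorm (I : FracIdl K)) * minkowskiBound K 1 := by
  rw [minkowskiBound, minkowskiBound, volume_fundamentalDomain_fractionalIdealLatticeBasis,
    volume_fundamentalDomain_fractionalIdealLatticeBasis, Units.val_one, absNorm_one,
    Rat.cast_one, ENNReal.ofReal_one, one_mul, mul_assoc]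

variable (K) in
open mixedEmbedding MeasureTheory in
theorem exists_ne_zero_mem_norm_canonicalEmbedding_le :
    ∃ C₀ : ℝ, 1 ≤ C₀ ∧ ∀ a : FracIdl K, a ≠ 0 → ∃ x ∈ a, x ≠ 0 ∧
      ‖canonicalEmbedding K x‖ ≤ C₀ * (absNorm a : ℝ) ^ (finrank ℚ K : ℝ)⁻¹ := by
  obtain ⟨B, hB⟩ : ∃ B : ℕ, minkowskiBound K 1 < convexBodyLTFactor K * B := by
    simpa only [mul_comm] using ENNReal.exists_nat_mul_gt
      (ENNReal.coe_ne_zero.2 (convexBodyLTFactor_ne_zero K)) (minkowskiBound_lt_top K 1).ne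
  have hB1 : 1 ≤ (B : ℝ) := by
    rcases Nat.eq_zero_or_pos B with rfl | h
    · simp at hB
    · exact_mod_cast h
  refine ⟨(B : ℝ) ^ (finrank ℚ K : ℝ)⁻¹, Real.one_le_rpow hB1 (by positivity), fun a ha => ?_⟩
  let N : ℝ≥0 := (absNorm a : ℝ).toNNReal
  let t : ℝ≥0 := (B * N) ^ (finrank ℚ K : ℝ)⁻¹
  have hvol : minkowskiBound K (Units.mk0 a ha) < volume (convexBodyLT K fun _ => t) := by
    rw [convexBodyLT_volume, Finset.prod_pow_eq_pow_sum, InfinitePlace.sum_mult_eq,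
      NNReal.rpow_inv_natCast_pow _ finrank_pos.ne', minkowskiBound_eq_absNorm_mul, Units.val_mk0]
    calc ENNReal.ofReal (absNorm a) * minkowskiBound K 1
        < N * (convexBodyLTFactor K * B) := by
          refine (ENNReal.mul_lt_mul_iff_right ?_ ENNReal.coe_ne_top).2 hB
          exact ENNReal.coe_ne_zero.2 (Real.toNNReal_pos.2 (absNorm_pos ha)).ne'
      _ = _ := by push_cast; ring
  obtain ⟨x, hxa, hx0, hx⟩ := exists_ne_zero_mem_ideal_lt K (Units.mk0 a ha) hvol
  refine ⟨x, hxa, hx0, (canonicalEmbedding.norm_le_iff x _).2 fun σ => ?_⟩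
  calc ‖σ x‖ = InfinitePlace.mk σ x := (InfinitePlace.apply σ x).symm
    _ ≤ t := (hx _).le
    _ = _ := by
      simp only [t, N, NNReal.coe_rpow, NNReal.coe_mul, NNReal.coe_natCast,
        Real.coe_toNNReal _ (absNorm_pos ha).le]
      exact Real.mul_rpow B.cast_nonneg (absNorm_pos ha).le

variable (K) in
theorem exists_isBalanced_eq_spanSingleton_mul_inv :
    ∃ D : ℝ, 1 ≤ D ∧ ∃ M : ℕ, ∀ a : FracIdl K, a ≠ 0 → ∃ x : K, ∃ J : Ideal (𝓞 K),
      x ≠ 0 ∧ J ≠ ⊥ ∧ Ideal.absNorm J ≤ M ∧ IsBalanced K D x ∧ IsBalanced K D x⁻¹ ∧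
        a = spanSingleton _ x * (J : FracIdl K)⁻¹ := by
  obtain ⟨C₀, hC₀, hmin⟩ := exists_ne_zero_mem_norm_canonicalEmbedding_le K
  set n := finrank ℚ K
  refine ⟨max C₀ (C₀ ^ (n - 1)), le_max_of_le_left hC₀, ⌈C₀ ^ n⌉₊, fun a ha => ?_⟩
  obtain ⟨x, hxa, hx0, hx⟩ := hmin a ha
  obtain ⟨J, hJa⟩ := exists_coeIdeal_mul_eq_spanSingleton ha hxa
  have hJ : J ≠ ⊥ := by
    rintro rfl
    simp [eq_comm, spanSingleton_eq_zero_iff, hx0] at hJa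
  have hNa := absNorm_pos ha
  have hnorm : (Ideal.absNorm J : ℝ) * absNorm a = |(Algebra.norm ℚ x : ℝ)| := by
    have := congrArg absNorm hJa
    rw [map_mul, coeIdeal_absNorm, absNorm_span_singleton] at this
    exact_mod_cast this
  have hJ1 : 1 ≤ (Ideal.absNorm J : ℝ) :=
    Nat.one_le_cast.2 (Nat.one_le_iff_ne_zero.2 (Ideal.absNorm_eq_zero_iff.not.2 hJ))
  have hbal : IsBalanced K C₀ x := hx.trans (by gcongr; nlinarith)
  have hJM : (Ideal.absNorm J : ℝ) ≤ C₀ ^ n := by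
    refine le_of_mul_le_mul_right ?_ hNa
    calc (Ideal.absNorm J : ℝ) * absNorm a
        = |(Algebra.norm ℚ x : ℝ)| := hnorm
      _ ≤ ‖canonicalEmbedding K x‖ ^ n := abs_norm_le_norm_canonicalEmbedding_pow x
      _ ≤ (C₀ * (absNorm a : ℝ) ^ (n : ℝ)⁻¹) ^ n := by gcongr
      _ = C₀ ^ n * absNorm a := by
        rw [mul_pow, Real.rpow_inv_natCast_pow hNa.le finrank_pos.ne']
  refine ⟨x, J, hx0, hJ, by exact_mod_cast hJM.trans (Nat.le_ceil _),
    hbal.mono (le_max_left _ _), (hbal.inv hx0).mono (le_max_right _ _), ?_⟩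
  rw [eq_mul_inv_iff_mul_eq₀ (coeIdeal_ne_zero.2 hJ), mul_comm, hJa]

end

/-- **Existence of norm-length compatible bases** (Proposition 3.1 of the paper). -/
theorem exists_norm_length_compatible_bases :
    ∃ C : ℝ, 1 < C ∧
      ∀ a : FracIdl K, a ≠ 0 →
        ∃ b : Module.Basis (Fin (Module.finrank ℚ K)) ℤ (latticeOf K a), IsNLCBasis K a C b := by
  obtain ⟨D, hD, M, hbal⟩ := exists_isBalanced_eq_spanSingleton_mul_inv K
  have hfin : ∀ᶠ A in atTop, ∀ J ∈ {J : Ideal (𝓞 K) | Ideal.absNorm J ≤ M}, J ≠ ⊥ →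
      ∃ b : Basis (Fin (finrank ℚ K)) ℤ (latticeOf K (J : FracIdl K)⁻¹),
        IsNLCBasis K (J : FracIdl K)⁻¹ A b :=
    (Ideal.finite_setOfPred_absNorm_le M).eventually_all.2 fun J _ =>
      eventually_imp_distrib_left.2 fun hJ =>
        eventually_exists_isNLCBasis (inv_ne_zero (coeIdeal_ne_zero.2 hJ))
  obtain ⟨A, hA, hA1⟩ := (hfin.and (eventually_gt_atTop 1)).exists
  refine ⟨A * D, one_lt_mul_of_lt_of_le hA1 hD, fun a ha => ?_⟩
  obtain ⟨x, J, hx0, hJ, hJM, hx, hx', rfl⟩ := hbal a ha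
  obtain ⟨b, hb⟩ := hA J hJM hJ
  exact hb.exists_spanSingleton_mul hx0 hx hx'

end
end

section
/- Let K be a number field of degree n and C ≥ 1. There is a constant B = B(K, C) such that for every nonzero fractional ideal 𝔞 of K and every norm-length compatible basis ι : ℤ^n ≅ 𝔞 with coefficient C, the function ℤ^n → ℤ given by x ↦ N_{K/ℚ}(ι(x))/N(𝔞) is represented by a homogeneous polynomial of degree n in the coordinates x_1,…,x_n with coefficients of absolute value at most B. -/
open NumberField
open scoped Classical

noncomputable section

variable (K : Type) [Field K] [NumberField K]

/-!
Fix an integral basis `e` of `𝓞 K`. For `v = ∑ xᵢ bᵢ ∈ 𝔞`, multiplication by `v` maps `𝓞 K`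
into `𝔞`; its matrix in the bases `e`, `b` is the pencil `∑ xᵢ Mᵢ`, where `Mᵢ` is the matrix of
multiplication by `bᵢ`. Composing with the base change from `b` to `e`, whose determinant is
`±N(𝔞)`, gives the matrix of multiplication by `v` on `K`, so `N(v) / N(𝔞) = ±det (∑ xᵢ Mᵢ)`,
a form of degree `n` with integer coefficients.

The entries of `Mᵢ` are the `b`-coordinates of `eⱼ bᵢ`. Norm-length compatibility bounds them by
`C N(𝔞)^(-1/n) ‖eⱼ bᵢ‖_can ≤ C N(𝔞)^(-1/n) ‖eⱼ‖_can · C N(𝔞)^(1/n) = C² ‖eⱼ‖_can`: the powers of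
`N(𝔞)` cancel, so the coefficients of the determinant are bounded independently of `𝔞`.
-/

namespace MvPolynomial

variable {σ R : Type*} [SeminormedCommRing R]

def l1Norm (p : MvPolynomial σ R) : ℝ := ∑ m ∈ p.support, ‖p.coeff m‖

lemma l1Norm_eq_sum_of_support_subset {p : MvPolynomial σ R} {s : Finset (σ →₀ ℕ)}
    (h : p.support ⊆ s) : p.l1Norm = ∑ m ∈ s, ‖p.coeff m‖ :=
  Finset.sum_subset h fun m _ hm => by rw [notMem_support_iff.mp hm, norm_zero]

lemma l1Norm_nonneg (p : MvPolynomial σ R) : 0 ≤ p.l1Norm :=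
  Finset.sum_nonneg fun _ _ => norm_nonneg _

lemma norm_coeff_le_l1Norm (p : MvPolynomial σ R) (m : σ →₀ ℕ) : ‖p.coeff m‖ ≤ p.l1Norm := by
  by_cases h : m ∈ p.support
  · exact Finset.single_le_sum (f := fun m => ‖p.coeff m‖) (fun _ _ => norm_nonneg _) h
  · simpa [notMem_support_iff.mp h] using l1Norm_nonneg p

@[simp]
lemma l1Norm_zero : (0 : MvPolynomial σ R).l1Norm = 0 := by simp [l1Norm]

@[simp]
lemma l1Norm_monomial (m : σ →₀ ℕ) (c : R) : (monomial m c).l1Norm = ‖c‖ := by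
  classical
  rw [l1Norm_eq_sum_of_support_subset support_monomial_subset, Finset.sum_singleton,
    coeff_monomial, if_pos rfl]

@[simp]
lemma l1Norm_neg (p : MvPolynomial σ R) : (-p).l1Norm = p.l1Norm := by
  simp [l1Norm]

lemma l1Norm_add_le (p q : MvPolynomial σ R) : (p + q).l1Norm ≤ p.l1Norm + q.l1Norm := by
  classical
  rw [l1Norm_eq_sum_of_support_subset support_add,
    l1Norm_eq_sum_of_support_subset Finset.subset_union_left,
    l1Norm_eq_sum_of_support_subset (Finset.subset_union_right (s₁ := p.support)),
    ← Finset.sum_add_distrib]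
  exact Finset.sum_le_sum fun m _ => by simpa only [coeff_add] using norm_add_le _ _

lemma l1Norm_sum_le {ι : Type*} (s : Finset ι) (f : ι → MvPolynomial σ R) :
    (∑ i ∈ s, f i).l1Norm ≤ ∑ i ∈ s, (f i).l1Norm :=
  Finset.le_sum_of_subadditive _ l1Norm_zero.le l1Norm_add_le s f

lemma l1Norm_mul_le (p q : MvPolynomial σ R) : (p * q).l1Norm ≤ p.l1Norm * q.l1Norm := by
  conv_lhs => rw [p.as_sum, q.as_sum, Finset.sum_mul_sum]
  calc _ ≤ ∑ m ∈ p.support, ∑ m' ∈ q.support,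
          (monomial m (p.coeff m) * monomial m' (q.coeff m')).l1Norm :=
        (l1Norm_sum_le _ _).trans (Finset.sum_le_sum fun m _ => l1Norm_sum_le _ _)
    _ ≤ ∑ m ∈ p.support, ∑ m' ∈ q.support, ‖p.coeff m‖ * ‖q.coeff m'‖ := by
        gcongr with m _ m' _
        rw [monomial_mul, l1Norm_monomial]
        exact norm_mul_le _ _
    _ = p.l1Norm * q.l1Norm := (Finset.sum_mul_sum _ _ _ _).symm

lemma l1Norm_prod_le [NormOneClass R] {ι : Type*} (s : Finset ι) (f : ι → MvPolynomial σ R) :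
    (∏ i ∈ s, f i).l1Norm ≤ ∏ i ∈ s, (f i).l1Norm :=
  Finset.le_prod_of_submultiplicative_of_nonneg _ l1Norm_nonneg
    (by rw [← C_1, ← monomial_zero', l1Norm_monomial, norm_one]) l1Norm_mul_le s f

lemma l1Norm_units_int_smul (u : ℤˣ) (p : MvPolynomial σ R) : (u • p).l1Norm = p.l1Norm := by
  rcases Int.units_eq_one_or u with rfl | rfl <;> simp

end MvPolynomial

namespace Matrix

open MvPolynomial

variable {n σ ι R : Type*}

section Determinant

variable [Fintype n] [DecidableEq n]

lemma l1Norm_det_le [SeminormedCommRing R] [NormOneClass R] {M : Matrix n n (MvPolynomial σ R)}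
    {A : ℝ} (h : ∀ i j, (M i j).l1Norm ≤ A) :
    M.det.l1Norm ≤ (Fintype.card n).factorial * A ^ Fintype.card n :=
  calc M.det.l1Norm ≤ ∑ τ : Equiv.Perm n, (Equiv.Perm.sign τ • ∏ i, M (τ i) i).l1Norm := by
        rw [det_apply]; exact l1Norm_sum_le _ _
    _ ≤ ∑ _τ : Equiv.Perm n, ∏ _i : n, A := by
        gcongr with τ
        rw [l1Norm_units_int_smul]
        exact (l1Norm_prod_le _ _).trans
          (Finset.prod_le_prod (fun _ _ => l1Norm_nonneg _) fun i _ => h _ _)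
    _ = _ := by simp [Fintype.card_perm]

lemma isHomogeneous_det [CommRing R] {M : Matrix n n (MvPolynomial σ R)} {d : ℕ}
    (h : ∀ i j, (M i j).IsHomogeneous d) : M.det.IsHomogeneous (Fintype.card n * d) := by
  rw [det_apply]
  refine IsHomogeneous.sum _ _ _ fun τ _ => ?_
  have hprod := IsHomogeneous.prod Finset.univ (fun i => M (τ i) i) (fun _ => d) fun i _ => h _ _
  rw [Finset.sum_const, Finset.card_univ, smul_eq_mul] at hprod
  rcases Int.units_eq_one_or (Equiv.Perm.sign τ) with hτ | hτ <;> rw [hτ]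
  · rwa [one_smul]
  · rw [Units.neg_smul, one_smul]; exact hprod.neg

end Determinant

variable [Fintype ι]

/-- The pencil `∑ i, X i • M i`. -/
def pencil [CommSemiring R] (M : ι → Matrix n n R) : Matrix n n (MvPolynomial ι R) :=
  of fun k j => ∑ i, monomial (Finsupp.single i 1) (M i k j)

lemma map_eval_pencil [CommSemiring R] (M : ι → Matrix n n R) (x : ι → R) :
    (pencil M).map (eval x) = ∑ i, x i • M i := by
  ext k j
  simp [pencil, eval_monomial, Finsupp.prod_single_index, Matrix.sum_apply, mul_comm]

variable [Fintype n] [DecidableEq n]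

lemma eval_det_pencil [CommRing R] (M : ι → Matrix n n R) (x : ι → R) :
    eval x (pencil M).det = (∑ i, x i • M i).det := by
  rw [RingHom.map_det, RingHom.mapMatrix_apply, map_eval_pencil]

lemma isHomogeneous_det_pencil [CommRing R] (M : ι → Matrix n n R) :
    (pencil M).det.IsHomogeneous (Fintype.card n) := by
  simpa using isHomogeneous_det (M := pencil M) (d := 1) fun k j =>
    IsHomogeneous.sum _ _ _ fun i _ => isHomogeneous_monomial _ (by simp)

lemma l1Norm_det_pencil_le [SeminormedCommRing R] [NormOneClass R] {M : ι → Matrix n n R} {A : ℝ}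
    (h : ∀ i k j, ‖M i k j‖ ≤ A) :
    (pencil M).det.l1Norm ≤
      (Fintype.card n).factorial * (Fintype.card ι * A) ^ Fintype.card n :=
  l1Norm_det_le fun k j =>
    calc (pencil M k j).l1Norm ≤ ∑ i, ‖M i k j‖ := by
          simpa [pencil] using
            l1Norm_sum_le Finset.univ fun i => monomial (Finsupp.single i 1) (M i k j)
      _ ≤ Fintype.card ι * A := by
          simpa using Finset.sum_le_sum fun i (_ : i ∈ (Finset.univ : Finset ι)) => h i k j

end Matrix

lemma Algebra.norm_eq_det_toMatrix_mul_det {R S ι : Type*} [CommRing R] [CommRing S]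
    [Algebra R S] [Fintype ι] [DecidableEq ι] (e : Module.Basis ι R S) (b : ι → S)
    (M : Matrix ι ι R) (v : S)
    (h : ∀ j, v * e j = ∑ k, M k j • b k) :
    Algebra.norm R v = e.det b * M.det := by
  have hmat : Algebra.leftMulMatrix e v = e.toMatrix b * M := by
    ext i j
    simp [Algebra.leftMulMatrix_eq_repr_mul, h, Matrix.mul_apply, Module.Basis.toMatrix_apply,
      mul_comm]
  rw [Algebra.norm_eq_matrix_det e, hmat, Matrix.det_mul, Module.Basis.det_apply]

section Lattice

open scoped nonZeroDivisors

variable {K} {ι : Type*} [Fintype ι] [DecidableEq ι] {a : FracIdl K}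

def latticeMul (a : FracIdl K) (y : 𝓞 K) : latticeOf K a →ₗ[ℤ] latticeOf K a :=
  (LinearMap.mulLeft ℤ (y : K)).restrict fun _ hw => (a : Submodule (𝓞 K) K).smul_mem y hw

/-- The matrix of multiplication by `w ∈ 𝔞`, as a map `𝓞 K → 𝔞`, in the bases `e` and `b`. -/
def mulMatrix (e : Module.Basis ι ℤ (𝓞 K)) (b : Module.Basis ι ℤ (latticeOf K a))
    (w : latticeOf K a) : Matrix ι ι ℤ :=
  Matrix.of fun k j => b.repr (latticeMul a (e j) w) k

lemma norm_eq_det_mul_det_mulMatrix (e : Module.Basis ι ℤ (𝓞 K))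
    (b : Module.Basis ι ℤ (latticeOf K a)) (w : latticeOf K a) :
    Algebra.norm ℚ (w : K) =
      (e.localizationLocalization ℚ ℤ⁰ K).det (fun i => (b i : K)) * (mulMatrix e b w).det := by
  rw [Int.cast_det]
  refine Algebra.norm_eq_det_toMatrix_mul_det _ _ _ _ fun j => ?_
  have hcol := congr_arg Subtype.val (b.sum_repr (latticeMul a (e j) w))
  simp only [Submodule.coe_sum, Submodule.coe_smul] at hcol
  calc (w : K) * e.localizationLocalization ℚ ℤ⁰ K j = (latticeMul a (e j) w : K) := by
        rw [Module.Basis.localizationLocalization_apply, mul_comm]; rfl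
    _ = _ := by simp [← hcol, mulMatrix, Int.cast_smul_eq_zsmul]

lemma abs_det_latticeBasis (e : Module.Basis ι ℤ (𝓞 K)) (b : Module.Basis ι ℤ (latticeOf K a)) :
    |(e.localizationLocalization ℚ ℤ⁰ K).det (fun i => (b i : K))| =
      FractionalIdeal.absNorm a :=
  FractionalIdeal.abs_det_basis_change e a
    (b.map ((Submodule.restrictScalarsEquiv ℤ (𝓞 K) K (a : Submodule (𝓞 K) K)).restrictScalars ℤ))

lemma exists_eval_det_pencil_eq_norm_div_absNorm (e : Module.Basis ι ℤ (𝓞 K))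
    (b : Module.Basis ι ℤ (latticeOf K a)) (ha : a ≠ 0) :
    ∃ ε : ℤ, |ε| = 1 ∧ ∀ x : ι → ℤ,
      ((MvPolynomial.eval x (MvPolynomial.C ε * (Matrix.pencil fun i => mulMatrix e b (b i)).det)
        : ℤ) : ℚ) = Algebra.norm ℚ (∑ i, x i • (b i : K)) / FractionalIdeal.absNorm a := by
  have hN : (FractionalIdeal.absNorm a : ℚ) ≠ 0 := by
    rwa [Ne, FractionalIdeal.absNorm_eq_zero_iff]
  obtain ⟨ε, hε, hdet⟩ : ∃ ε : ℤ, |ε| = 1 ∧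
      (e.localizationLocalization ℚ ℤ⁰ K).det (fun i => (b i : K)) =
        ε * FractionalIdeal.absNorm a := by
    rcases (abs_eq (FractionalIdeal.absNorm_nonneg a)).mp (abs_det_latticeBasis e b) with h | h
    · exact ⟨1, by simp, by simp [h]⟩
    · exact ⟨-1, by simp, by simp [h]⟩
  refine ⟨ε, hε, fun x => ?_⟩
  have hv : ∑ i, x i • (b i : K) = ((∑ i, x i • b i : latticeOf K a) : K) := by simp
  have hlin : mulMatrix e b (∑ i, x i • b i) = ∑ i, x i • mulMatrix e b (b i) := by
    ext k j
    simp [mulMatrix, Matrix.sum_apply]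
  rw [hv, norm_eq_det_mul_det_mulMatrix e, hlin, hdet, map_mul, MvPolynomial.eval_C,
    Matrix.eval_det_pencil]
  field_simp
  push_cast
  ring

end Lattice

section CanonicalNorm

variable {K}

lemma canCoordNorm_intCast {n : ℕ} (bv : Fin n → K) (c : Fin n → ℤ) :
    canCoordNorm K bv (fun i => c i) = ‖canonicalEmbedding K (∑ i, c i • bv i)‖ := by
  have h : ∀ σ : K →+* ℂ,
      ‖∑ i, ((c i : ℝ) : ℂ) * σ (bv i)‖ = ‖σ (∑ i, c i • bv i)‖ := by
    intro σ
    simp [map_sum]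
  simp only [canCoordNorm, h]
  exact le_antisymm (ciSup_le fun σ => norm_le_pi_norm (canonicalEmbedding K _) σ)
    ((canonicalEmbedding.norm_le_iff _ _).mpr fun σ =>
      le_ciSup (f := fun σ : K →+* ℂ => ‖σ _‖) (Finite.bddAbove_range _) σ)

variable {a : FracIdl K} {C : ℝ} {n : ℕ} {b : Module.Basis (Fin n) ℤ (latticeOf K a)}

lemma IsNLCBasis.abs_repr_le (hb : IsNLCBasis K a C b) (hC : 0 < C) (w : latticeOf K a)
    (k : Fin n) :
    (FractionalIdeal.absNorm a : ℝ) ^ (n : ℝ)⁻¹ * |(b.repr w k : ℝ)| ≤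
      C * ‖canonicalEmbedding K (w : K)‖ := by
  have hlow := (hb fun i => (b.repr w i : ℝ)).1
  have hw : ∑ i, b.repr w i • (b i : K) = w := by
    simpa only [Submodule.coe_sum, Submodule.coe_smul] using congr_arg Subtype.val (b.sum_repr w)
  rw [canCoordNorm_intCast, hw] at hlow
  have hk : |(b.repr w k : ℝ)| ≤ ⨆ i, |(b.repr w i : ℝ)| :=
    le_ciSup (f := fun i => |(b.repr w i : ℝ)|) (Finite.bddAbove_range _) k
  rw [one_div, mul_assoc, inv_mul_le_iff₀ hC] at hlow
  calc _ ≤ (FractionalIdeal.absNorm a : ℝ) ^ (n : ℝ)⁻¹ * ⨆ i, |(b.repr w i : ℝ)| := by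
        gcongr
        exact Real.rpow_nonneg (mod_cast FractionalIdeal.absNorm_nonneg a) _
    _ ≤ _ := hlow

lemma IsNLCBasis.norm_basis_le (hb : IsNLCBasis K a C b) (i : Fin n) :
    ‖canonicalEmbedding K (b i : K)‖ ≤ C * (FractionalIdeal.absNorm a : ℝ) ^ (n : ℝ)⁻¹ := by
  have hup := (hb fun k => ((Pi.single i (1 : ℤ) : Fin n → ℤ) k : ℝ)).2
  have : Nonempty (Fin n) := ⟨i⟩
  have hsum : ∑ k, (Pi.single i (1 : ℤ) : Fin n → ℤ) k • (b k : K) = b i := by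
    simp [Pi.single_apply]
  have hsup : (⨆ k, |((Pi.single i (1 : ℤ) : Fin n → ℤ) k : ℝ)|) = 1 := by
    refine le_antisymm (ciSup_le fun k => ?_) (le_ciSup_of_le (Finite.bddAbove_range _) i ?_)
    · by_cases hk : k = i <;> simp [hk]
    · simp
  rwa [canCoordNorm_intCast, hsup, mul_one, hsum] at hup

lemma IsNLCBasis.abs_repr_latticeMul_le (hb : IsNLCBasis K a C b) (hC : 0 < C) (ha : a ≠ 0)
    (y : 𝓞 K) (i k : Fin n) :
    |(b.repr (latticeMul a y (b i)) k : ℝ)| ≤ C ^ 2 * ‖canonicalEmbedding K (y : K)‖ := by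
  set N := (FractionalIdeal.absNorm a : ℝ) ^ (n : ℝ)⁻¹
  have hN : 0 < N := Real.rpow_pos_of_pos (mod_cast (FractionalIdeal.absNorm_nonneg a).lt_of_ne
    (Ne.symm (FractionalIdeal.absNorm_eq_zero_iff.not.mpr ha))) _
  refine le_of_mul_le_mul_left ?_ hN
  calc N * |(b.repr (latticeMul a y (b i)) k : ℝ)|
      ≤ C * ‖canonicalEmbedding K ((y : K) * b i)‖ := hb.abs_repr_le hC _ k
    _ ≤ C * (‖canonicalEmbedding K (y : K)‖ * (C * N)) := by
        rw [map_mul]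
        gcongr
        exact (norm_mul_le _ _).trans (by gcongr; exact hb.norm_basis_le i)
    _ = N * (C ^ 2 * ‖canonicalEmbedding K (y : K)‖) := by ring

end CanonicalNorm

/-- **The normalized norm function in a norm-length compatible basis**
(Proposition 3.4 of the paper): there is a constant `B = B(K, C)` such that for every nonzero
fractional ideal `𝔞` and every norm-length compatible basis `ι : ℤ^n ≅ 𝔞` with coefficient `C`,
the function `x ↦ N_{K/ℚ}(ι(x))/N(𝔞)` is represented by a homogeneous polynomial of degree `n`
with integer coefficients of absolute value at most `B`. -/
theorem normalized_norm_is_bounded_homogeneous_polynomial (C : ℝ) (hC : 1 ≤ C) :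
    ∃ B : ℝ, 0 < B ∧
      ∀ a : FracIdl K, a ≠ 0 →
        ∀ b : Module.Basis (Fin (Module.finrank ℚ K)) ℤ (latticeOf K a), IsNLCBasis K a C b →
          ∃ P : MvPolynomial (Fin (Module.finrank ℚ K)) ℤ,
            P.IsHomogeneous (Module.finrank ℚ K) ∧
            (∀ m, ((|P.coeff m| : ℤ) : ℝ) ≤ B) ∧
            ∀ x : Fin (Module.finrank ℚ K) → ℤ,
              ((MvPolynomial.eval x P : ℤ) : ℚ) =
                Algebra.norm ℚ (∑ i, x i • (b i : K)) / FractionalIdeal.absNorm a := by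
  set n := Module.finrank ℚ K
  have hn : 0 < n := Module.finrank_pos
  have hC0 : 0 < C := one_pos.trans_le hC
  let e : Module.Basis (Fin n) ℤ (𝓞 K) :=
    Module.finBasisOfFinrankEq ℤ (𝓞 K) (RingOfIntegers.rank K)
  set A := C ^ 2 * ∑ j, ‖canonicalEmbedding K (e j : K)‖
  have hA : 0 < A := by
    have : Nonempty (Fin n) := ⟨⟨0, hn⟩⟩
    refine mul_pos (by positivity)
      (Finset.sum_pos (fun j _ => norm_pos_iff.mpr ?_) Finset.univ_nonempty)
    simpa using e.ne_zero j
  refine ⟨n.factorial * (n * A) ^ n, by positivity, fun a ha b hb => ?_⟩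
  obtain ⟨ε, hε, heval⟩ := exists_eval_det_pencil_eq_norm_div_absNorm e b ha
  set M := fun i => mulMatrix e b (b i)
  refine ⟨MvPolynomial.C ε * (Matrix.pencil M).det, ?_, fun m => ?_, heval⟩
  · simpa using (MvPolynomial.isHomogeneous_C _ ε).mul (Matrix.isHomogeneous_det_pencil M)
  · have hentry : ∀ i k j, ‖M i k j‖ ≤ A := fun i k j =>
      calc _ ≤ C ^ 2 * ‖canonicalEmbedding K (e j : K)‖ :=
            (Int.norm_eq_abs _).trans_le (hb.abs_repr_latticeMul_le hC0 ha _ i k)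
        _ ≤ A := mul_le_mul_of_nonneg_left (Finset.single_le_sum
            (f := fun j => ‖canonicalEmbedding K (e j : K)‖) (fun _ _ => norm_nonneg _)
            (Finset.mem_univ j)) (by positivity)
    rw [MvPolynomial.coeff_C_mul, abs_mul, hε, one_mul, Int.cast_abs, ← Int.norm_eq_abs]
    simpa using (MvPolynomial.norm_coeff_le_l1Norm _ m).trans (Matrix.l1Norm_det_pencil_le hentry)

end
end

section
/- Let ψ_1,…,ψ_t : ℤ^d → ℤ^n be linear maps having Cauchy–Schwarz complexity ≤ s at some index i ∈ {1,…,t}. Then there exists a surjective linear map π : ℤ^{d'} → ℤ^d with d' ≤ (s+2)·d such that the composites ψ_1∘π, …, ψ_t∘π : ℤ^{d'} → ℤ^n are in s-normal form at the index i. Moreover, there exist constants A = A(d,n) and B = B(n) such that if all ψ_j have coefficients of absolute value ≤ L, then π can be chosen so that the maps ψ_j∘π have coefficients of absolute value ≤ A·L^B. -/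
/-!
For each class `C_k` of the partition, the common kernel `K_k` of the `ψ_j`, `j ∈ C_k`, contains
`d` integer vectors with small entries that span a subgroup of finite index of `K_k`: impose the
coordinate equations `ℓ = 0` one at a time, replacing the current vectors `v_p` by
`ℓ(v_{p₀}) v_p - ℓ(v_p) v_{p₀}` for some `p₀` with `ℓ(v_{p₀}) ≠ 0`. With `V_k` the matrix of these
vectors, `π(x_0, x_1, …, x_{s+1}) = x_0 + ∑_k V_k x_{k+1}` is surjective thanks to `x_0`, every
`ψ_j` with `j ∈ C_k` vanishes on the block of `x_{k+1}`, and `ψ_i` maps that block onto a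
subgroup of finite index of `ψ_i(K_k)`.
-/

open scoped Classical

noncomputable section

/-- The submodule `ℤ^B ⊆ ℤ^d` spanned by the standard vectors indexed by `B`. -/
def coordSubmodule (d : ℕ) (B : Finset (Fin d)) : Submodule ℤ (Fin d → ℤ) where
  carrier := {x | ∀ m, m ∉ B → x m = 0}
  add_mem' := by
    intro x y hx hy m hm
    simp [hx m hm, hy m hm]
  zero_mem' := fun m _ => rfl
  smul_mem' := by
    intro r x hx m hm
    simp [hx m hm]

/-- The system `ψ` of linear maps `ℤ^d → ℤ^n` has Cauchy–Schwarz complexity `≤ s` at the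
index `i`: the other indices can be partitioned into `s+1` classes such that for each class,
the restriction of `ψ i` to the intersection of the kernels of the maps of that class has
finite cokernel. -/
def CSComplexityAt {t d n : ℕ} (ψ : Fin t → ((Fin d → ℤ) →ₗ[ℤ] (Fin n → ℤ)))
    (i : Fin t) (s : ℕ) : Prop :=
  ∃ cl : Fin t → Fin (s + 1), ∀ k : Fin (s + 1),
    Finite ((Fin n → ℤ) ⧸ LinearMap.range ((ψ i).comp
      (Submodule.subtype (⨅ j ∈ {j : Fin t | j ≠ i ∧ cl j = k}, LinearMap.ker (ψ j)))))

/-- The system `ψ` is in `s`-normal form at the index `i`: there are disjoint sets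
`B_1, …, B_{s+1}` of standard basis vectors such that every `ψ j` (`j ≠ i`) vanishes identically
on some `ℤ^{B_k}`, while each restriction `ψ i : ℤ^{B_k} → ℤ^n` has finite cokernel. -/
def InNormalFormAt {t d n : ℕ} (ψ : Fin t → ((Fin d → ℤ) →ₗ[ℤ] (Fin n → ℤ)))
    (i : Fin t) (s : ℕ) : Prop :=
  ∃ B : Fin (s + 1) → Finset (Fin d),
    (∀ k l, k ≠ l → Disjoint (B k) (B l)) ∧
    (∀ j, j ≠ i → ∃ k, ∀ x ∈ coordSubmodule d (B k), ψ j x = 0) ∧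
    (∀ k, Finite ((Fin n → ℤ) ⧸
      LinearMap.range ((ψ i).comp (coordSubmodule d (B k)).subtype)))


open Finset

section Torsion

variable {M N P : Type*} [AddCommGroup M] [AddCommGroup N] [AddCommGroup P]

theorem finite_quotient_iff_forall_exists_zsmul_mem [Module.Finite ℤ P] (S : Submodule ℤ P) :
    Finite (P ⧸ S) ↔ ∀ x : P, ∃ c : ℤ, c ≠ 0 ∧ c • x ∈ S := by
  constructor
  · intro _ x
    obtain ⟨c, hc, hcx⟩ :=
      (isOfFinAddOrder_of_finite (Submodule.Quotient.mk (p := S) x)).exists_nsmul_eq_zero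
    refine ⟨c, by exact_mod_cast hc.ne', ?_⟩
    rwa [← Submodule.Quotient.mk_eq_zero, Submodule.Quotient.mk_smul, natCast_zsmul]
  · intro h
    refine Module.finite_of_fg_torsion _ fun y => ?_
    obtain ⟨x, rfl⟩ := Submodule.Quotient.mk_surjective S y
    obtain ⟨c, hc, hcx⟩ := h x
    exact ⟨⟨c, mem_nonZeroDivisors_of_ne_zero hc⟩,
      (Submodule.Quotient.mk_eq_zero S).2 hcx⟩

/-- When `K` is finitely generated, this says that `range V` is a subgroup of finite index
of `K`. -/
def ParametrizesUpToTorsion (V : M →ₗ[ℤ] N) (K : Submodule ℤ N) : Prop :=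
  LinearMap.range V ≤ K ∧ ∃ c : ℤ, c ≠ 0 ∧ ∀ x ∈ K, c • x ∈ LinearMap.range V

namespace ParametrizesUpToTorsion

variable {V : M →ₗ[ℤ] N} {K : Submodule ℤ N}

theorem id_top : ParametrizesUpToTorsion (LinearMap.id : N →ₗ[ℤ] N) ⊤ :=
  ⟨le_top, 1, one_ne_zero, fun x _ => ⟨x, by simp⟩⟩

theorem inf_ker_of_comp_eq_zero (hV : ParametrizesUpToTorsion V K) (ℓ : N →ₗ[ℤ] ℤ)
    (hℓ : ℓ ∘ₗ V = 0) : ParametrizesUpToTorsion V (K ⊓ LinearMap.ker ℓ) := by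
  obtain ⟨hVK, c, hc, hcK⟩ := hV
  refine ⟨le_inf hVK ?_, c, hc, fun x hx => hcK x hx.1⟩
  rintro _ ⟨y, rfl⟩
  exact LinearMap.congr_fun hℓ y

theorem inf_ker (hV : ParametrizesUpToTorsion V K) (ℓ : N →ₗ[ℤ] ℤ) (y₀ : M)
    (hy₀ : ℓ (V y₀) ≠ 0) :
    ParametrizesUpToTorsion (ℓ (V y₀) • V - (ℓ ∘ₗ V).smulRight (V y₀))
      (K ⊓ LinearMap.ker ℓ) := by
  obtain ⟨hVK, c, hc, hcK⟩ := hV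
  have hV₀ : V y₀ ∈ K := hVK ⟨y₀, rfl⟩
  refine ⟨?_, ℓ (V y₀) * c, mul_ne_zero hy₀ hc, fun x hx => ?_⟩
  · rintro _ ⟨y, rfl⟩
    refine ⟨?_, ?_⟩
    · simpa using K.sub_mem (K.smul_mem _ (hVK ⟨y, rfl⟩)) (K.smul_mem _ hV₀)
    · simp [mul_comm]
  · obtain ⟨y, hy⟩ := hcK x hx.1
    have hℓx : ℓ x = 0 := hx.2
    refine ⟨y, ?_⟩
    simp [hy, hℓx, mul_smul]

theorem finite_quotient_range_comp [Module.Finite ℤ P] (hV : ParametrizesUpToTorsion V K)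
    (f : N →ₗ[ℤ] P) (hf : Finite (P ⧸ LinearMap.range (f ∘ₗ K.subtype))) :
    Finite (P ⧸ LinearMap.range (f ∘ₗ V)) := by
  obtain ⟨-, c, hc, hcK⟩ := hV
  rw [finite_quotient_iff_forall_exists_zsmul_mem] at hf ⊢
  intro z
  obtain ⟨a, ha, x, hx⟩ := hf z
  obtain ⟨y, hy⟩ := hcK x x.2
  refine ⟨c * a, mul_ne_zero hc ha, y, ?_⟩
  simp [hy, ← hx, mul_smul]

end ParametrizesUpToTorsion

end Torsion

theorem norm_apply_le_of_norm_apply_single_le {d : ℕ} {E : Type*} [SeminormedAddCommGroup E]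
    (φ : (Fin d → ℤ) →ₗ[ℤ] E) {L : ℝ} (hφ : ∀ p, ‖φ (Pi.single p 1)‖ ≤ L)
    (x : Fin d → ℤ) : ‖φ x‖ ≤ d * L * ‖x‖ := by
  have hx : φ x = ∑ p, x p • φ (Pi.single p 1) := by
    conv_lhs => rw [← Finset.univ_sum_single x]
    refine (map_sum _ _ _).trans (Finset.sum_congr rfl fun p _ => ?_)
    rw [← map_zsmul]
    congr 1
    ext q
    by_cases h : q = p <;> simp [h]
  calc ‖φ x‖ ≤ ∑ p, ‖x p‖ * ‖φ (Pi.single p 1)‖ := by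
        rw [hx]
        exact (norm_sum_le _ _).trans (Finset.sum_le_sum fun p _ => norm_zsmul_le _ _)
    _ ≤ ∑ _p : Fin d, ‖x‖ * L :=
        Finset.sum_le_sum fun p _ => mul_le_mul (norm_le_pi_norm x p) (hφ p) (norm_nonneg _)
          (norm_nonneg _)
    _ = d * L * ‖x‖ := by simp; ring

/-- Each new equation `ℓ a = 0` at most squares the size of the generators and multiplies it by
`2 (d + 1) L`, hence the doubly exponential bound. -/
theorem exists_parametrizesUpToTorsion_iInf_ker {d : ℕ} {ι : Type*}
    (ℓ : ι → (Fin d → ℤ) →ₗ[ℤ] ℤ) {L : ℝ} (hL : 1 ≤ L)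
    (hℓ : ∀ r p, ‖ℓ r (Pi.single p 1)‖ ≤ L) (S : Finset ι) :
    ∃ V : Module.End ℤ (Fin d → ℤ),
      ParametrizesUpToTorsion V (⨅ r ∈ S, LinearMap.ker (ℓ r)) ∧
      ∀ p, ‖V (Pi.single p 1)‖ ≤ (2 * (d + 1) * L) ^ 3 ^ #S := by
  set E : ℝ := 2 * (d + 1) * L with hE_def
  have hE : 1 ≤ E := by
    have : (0 : ℝ) ≤ d := d.cast_nonneg
    nlinarith
  induction S using Finset.induction_on with
  | empty =>
    refine ⟨LinearMap.id, by simpa using ParametrizesUpToTorsion.id_top, fun p => ?_⟩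
    simpa [Pi.norm_single] using hE
  | insert a S ha ih =>
    obtain ⟨V, hV, hVS⟩ := ih
    rw [Finset.iInf_insert, inf_comm, Finset.card_insert_of_notMem ha]
    set C : ℝ := E ^ 3 ^ #S
    by_cases h : ∀ p, ℓ a (V (Pi.single p 1)) = 0
    · have hℓV : ℓ a ∘ₗ V = 0 := (Pi.basisFun ℤ (Fin d)).ext fun p => by simpa using h p
      refine ⟨V, hV.inf_ker_of_comp_eq_zero _ hℓV, fun p => (hVS p).trans ?_⟩
      exact pow_le_pow_right₀ hE (Nat.pow_le_pow_right (by norm_num) (Nat.le_succ _))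
    obtain ⟨p₀, hp₀⟩ := not_forall.1 h
    refine ⟨_, hV.inf_ker _ _ hp₀, fun p => ?_⟩
    have hℓV : ∀ q, ‖ℓ a (V (Pi.single q 1))‖ ≤ d * L * C := fun q =>
      (norm_apply_le_of_norm_apply_single_le _ (hℓ a) _).trans
        (mul_le_mul_of_nonneg_left (hVS q) (by positivity))
    calc ‖(ℓ a (V (Pi.single p₀ 1)) • V - (ℓ a ∘ₗ V).smulRight (V (Pi.single p₀ 1)))
            (Pi.single p 1)‖
        = ‖ℓ a (V (Pi.single p₀ 1)) • V (Pi.single p 1)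
            - ℓ a (V (Pi.single p 1)) • V (Pi.single p₀ 1)‖ := by simp
      _ ≤ ‖ℓ a (V (Pi.single p₀ 1))‖ * ‖V (Pi.single p 1)‖
            + ‖ℓ a (V (Pi.single p 1))‖ * ‖V (Pi.single p₀ 1)‖ :=
          (norm_sub_le _ _).trans (add_le_add (norm_zsmul_le _ _) (norm_zsmul_le _ _))
      _ ≤ d * L * C * C + d * L * C * C := by
          gcongr
          exacts [hℓV p₀, hVS p, hℓV p, hVS p₀]
      _ ≤ E * C ^ 2 := by
          have : (0 : ℝ) ≤ d := d.cast_nonneg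
          rw [hE_def]
          nlinarith
      _ = E ^ (2 * 3 ^ #S + 1) := by ring
      _ ≤ E ^ 3 ^ (#S + 1) :=
          pow_le_pow_right₀ hE (by linarith [Nat.one_le_pow #S 3 three_pos, pow_succ 3 #S])

theorem eq_zero_of_norm_apply_single_lt_one {d n : ℕ} (φ : (Fin d → ℤ) →ₗ[ℤ] (Fin n → ℤ))
    (hφ : ∀ p, ‖φ (Pi.single p 1)‖ < 1) : φ = 0 := by
  refine (Pi.basisFun ℤ (Fin d)).ext fun p => funext fun m => ?_
  have h : ‖φ (Pi.single p 1) m‖ < 1 := (norm_le_pi_norm _ m).trans_lt (hφ p)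
  rw [Int.norm_eq_abs, ← Int.cast_abs] at h
  simpa using Int.abs_lt_one_iff.1 (by exact_mod_cast h)

section Blocks

variable {m : ℕ} (d : ℕ) {M : Type*} [AddCommGroup M]

def coordBlock (k : Fin m) : Finset (Fin (m * d)) :=
  univ.filter fun x => (finProdFinEquiv.symm x).1 = k

theorem disjoint_coordBlock {k l : Fin m} (h : k ≠ l) :
    Disjoint (coordBlock d k) (coordBlock d l) := by
  rw [coordBlock, coordBlock, Finset.disjoint_filter]
  rintro x - rfl
  exact h

variable {d}

def blockSum (Q : Fin m → (Fin d → ℤ) →ₗ[ℤ] M) : (Fin (m * d) → ℤ) →ₗ[ℤ] M :=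
  ∑ k, Q k ∘ₗ LinearMap.funLeft ℤ ℤ fun p => finProdFinEquiv (k, p)

variable (Q : Fin m → (Fin d → ℤ) →ₗ[ℤ] M)

theorem blockSum_apply (x : Fin (m * d) → ℤ) :
    blockSum Q x = ∑ k, Q k fun p => x (finProdFinEquiv (k, p)) :=
  LinearMap.sum_apply _ _ _

theorem blockSum_single (k : Fin m) (p : Fin d) :
    blockSum Q (Pi.single (finProdFinEquiv (k, p)) 1) = Q k (Pi.single p 1) := by
  rw [blockSum_apply, Finset.sum_eq_single k]
  · congr 1
    funext q
    simp [Pi.single_apply]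
  · intro l _ hl
    convert map_zero (Q l)
    simp [hl]
  · simp

theorem range_blockSum_comp_subtype (k : Fin m) :
    LinearMap.range (blockSum Q ∘ₗ (coordSubmodule (m * d) (coordBlock d k)).subtype) =
      LinearMap.range (Q k) := by
  have hblock : ∀ x ∈ coordSubmodule (m * d) (coordBlock d k),
      blockSum Q x = Q k fun p => x (finProdFinEquiv (k, p)) := by
    intro x hx
    rw [blockSum_apply, Finset.sum_eq_single k]
    · intro l _ hl
      convert map_zero (Q l)
      refine hx _ ?_
      simpa only [coordBlock, Finset.mem_filter, Finset.mem_univ, true_and,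
        Equiv.symm_apply_apply] using hl
    · simp
  apply le_antisymm
  · rintro _ ⟨⟨x, hx⟩, rfl⟩
    exact ⟨_, (hblock x hx).symm⟩
  · rintro _ ⟨z, rfl⟩
    let x : Fin (m * d) → ℤ := fun y =>
      if (finProdFinEquiv.symm y).1 = k then z (finProdFinEquiv.symm y).2 else 0
    have hx : x ∈ coordSubmodule (m * d) (coordBlock d k) := fun y hy =>
      if_neg (by simpa [coordBlock] using hy)
    refine ⟨⟨x, hx⟩, ?_⟩
    simp only [LinearMap.comp_apply, Submodule.coe_subtype, hblock x hx]
    congr 1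
    funext p
    simp only [x, Equiv.symm_apply_apply, if_pos]

theorem surjective_blockSum_cons (V : Fin m → Module.End ℤ (Fin d → ℤ)) :
    Function.Surjective (blockSum (Fin.cons LinearMap.id V : Fin (m + 1) → _)) := by
  have h0 := range_blockSum_comp_subtype (Fin.cons LinearMap.id V : Fin (m + 1) → _) 0
  rw [Fin.cons_zero, LinearMap.range_id] at h0
  rw [← LinearMap.range_eq_top, eq_top_iff, ← h0]
  exact LinearMap.range_comp_le_range _ _

end Blocks

section NormalForm

variable {t d n s : ℕ} (ψ : Fin t → (Fin d → ℤ) →ₗ[ℤ] (Fin n → ℤ)) (i : Fin t)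
  (cl : Fin t → Fin (s + 1))

def classKernel (k : Fin (s + 1)) : Submodule ℤ (Fin d → ℤ) :=
  ⨅ j ∈ {j : Fin t | j ≠ i ∧ cl j = k}, LinearMap.ker (ψ j)

variable {ψ i cl}

theorem mem_classKernel {k : Fin (s + 1)} {x : Fin d → ℤ} :
    x ∈ classKernel ψ i cl k ↔ ∀ j, j ≠ i → cl j = k → ψ j x = 0 := by
  simp [classKernel, Submodule.mem_iInf]

variable (ψ i cl)

theorem classKernel_eq_iInf_ker_proj (k : Fin (s + 1)) :
    classKernel ψ i cl k = ⨅ r ∈ univ.filter fun r : Fin t × Fin n => r.1 ≠ i ∧ cl r.1 = k,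
      LinearMap.ker (LinearMap.proj r.2 ∘ₗ ψ r.1) := by
  ext x
  simp only [mem_classKernel, Submodule.mem_iInf, Finset.mem_filter, Finset.mem_univ, true_and,
    LinearMap.mem_ker, LinearMap.comp_apply, LinearMap.proj_apply, Prod.forall, funext_iff,
    Pi.zero_apply]
  exact ⟨fun h j m hj => h j hj.1 hj.2 m, fun h j hj hcl m => h j m ⟨hj, hcl⟩⟩

theorem inNormalFormAt_comp_blockSum
    (hcl : ∀ k, Finite ((Fin n → ℤ) ⧸
      LinearMap.range ((ψ i).comp (classKernel ψ i cl k).subtype)))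
    (V : Fin (s + 1) → Module.End ℤ (Fin d → ℤ))
    (hV : ∀ k, ParametrizesUpToTorsion (V k) (classKernel ψ i cl k)) :
    InNormalFormAt (fun j => (ψ j).comp (blockSum (Fin.cons LinearMap.id V))) i s := by
  set π := blockSum (Fin.cons LinearMap.id V : Fin (s + 2) → _)
  have hrange : ∀ k : Fin (s + 1), LinearMap.range
      (π ∘ₗ (coordSubmodule ((s + 2) * d) (coordBlock d k.succ)).subtype) = LinearMap.range (V k) :=
    fun k => by rw [range_blockSum_comp_subtype, Fin.cons_succ]
  refine ⟨fun k => coordBlock d k.succ, fun k l hkl => disjoint_coordBlock d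
    ((Fin.succ_injective _).ne hkl), fun j hj => ⟨cl j, fun x hx => ?_⟩, fun k => ?_⟩
  · have hπx : π x ∈ classKernel ψ i cl (cl j) :=
      (hV (cl j)).1 (hrange (cl j) ▸ ⟨⟨x, hx⟩, rfl⟩)
    exact mem_classKernel.1 hπx j hj rfl
  · rw [LinearMap.comp_assoc, LinearMap.range_comp, hrange, ← LinearMap.range_comp]
    exact (hV k).finite_quotient_range_comp (ψ i) (hcl k)

theorem exists_surjective_inNormalFormAt_of_norm_le (hψ : CSComplexityAt ψ i s) {L : ℝ}
    (hL : 1 ≤ L) (hψL : ∀ j p, ‖ψ j (Pi.single p 1)‖ ≤ L) :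
    ∃ π : (Fin ((s + 2) * d) → ℤ) →ₗ[ℤ] (Fin d → ℤ), Function.Surjective π ∧
      InNormalFormAt (fun j => (ψ j).comp π) i s ∧
      ∀ j κ, ‖ψ j (π (Pi.single κ 1))‖ ≤ (2 * (d + 1) * L) ^ (3 ^ (t * n) + 1) := by
  obtain ⟨cl, hcl⟩ := hψ
  set E : ℝ := 2 * (d + 1) * L with hE_def
  have hdL : d * L ≤ E := by
    rw [hE_def]
    nlinarith
  have hE : 1 ≤ E := by
    rw [hE_def]
    nlinarith
  have hkernel : ∀ k, ∃ V : Module.End ℤ (Fin d → ℤ),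
      ParametrizesUpToTorsion V (classKernel ψ i cl k) ∧
      ∀ p, ‖V (Pi.single p 1)‖ ≤ E ^ 3 ^ (t * n) := by
    intro k
    obtain ⟨V, hV, hVE⟩ := exists_parametrizesUpToTorsion_iInf_ker
      (fun r : Fin t × Fin n => LinearMap.proj r.2 ∘ₗ ψ r.1) hL
      (fun r p => (norm_le_pi_norm (ψ r.1 (Pi.single p 1)) r.2).trans (hψL _ _)) _
    have hcard : #(univ.filter fun r : Fin t × Fin n => r.1 ≠ i ∧ cl r.1 = k) ≤ t * n :=
      (card_filter_le _ _).trans (by simp)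
    refine ⟨V, classKernel_eq_iInf_ker_proj ψ i cl k ▸ hV, fun p => (hVE p).trans ?_⟩
    exact pow_le_pow_right₀ hE (Nat.pow_le_pow_right three_pos hcard)
  choose V hV hVE using hkernel
  refine ⟨_, surjective_blockSum_cons V, inNormalFormAt_comp_blockSum ψ i cl hcl V hV,
    fun j κ => ?_⟩
  obtain ⟨⟨k, p⟩, rfl⟩ := finProdFinEquiv.surjective κ
  have hblock : ‖(Fin.cons LinearMap.id V : Fin (s + 2) → _) k (Pi.single p 1)‖ ≤
      E ^ 3 ^ (t * n) := by
    refine Fin.cases ?_ (fun k => ?_) k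
    · simpa [Pi.norm_single] using one_le_pow₀ hE
    · simpa using hVE k p
  calc ‖ψ j (blockSum (Fin.cons LinearMap.id V) (Pi.single (finProdFinEquiv (k, p)) 1))‖
      ≤ d * L * E ^ 3 ^ (t * n) := by
        rw [blockSum_single]
        exact (norm_apply_le_of_norm_apply_single_le _ (hψL j) _).trans
          (mul_le_mul_of_nonneg_left hblock (by positivity))
    _ ≤ E * E ^ 3 ^ (t * n) := by gcongr
    _ = E ^ (3 ^ (t * n) + 1) := (pow_succ' _ _).symm

end NormalForm

/-- **Reduction to normal form** (Proposition E.2 of the paper). -/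
theorem normal_form_reduction (t d n s : ℕ) :
    (∀ (ψ : Fin t → ((Fin d → ℤ) →ₗ[ℤ] (Fin n → ℤ))) (i : Fin t),
      CSComplexityAt ψ i s →
        ∃ (d' : ℕ), d' ≤ (s + 2) * d ∧
          ∃ π : (Fin d' → ℤ) →ₗ[ℤ] (Fin d → ℤ),
            Function.Surjective π ∧ InNormalFormAt (fun j => (ψ j).comp π) i s) ∧
    (∃ A B : ℝ, 0 < A ∧ 0 < B ∧
      ∀ (ψ : Fin t → ((Fin d → ℤ) →ₗ[ℤ] (Fin n → ℤ))) (i : Fin t),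
        CSComplexityAt ψ i s →
          ∀ L : ℝ, 0 < L → (∀ j k m, (|ψ j (Pi.single k 1) m| : ℝ) ≤ L) →
            ∃ (d' : ℕ), d' ≤ (s + 2) * d ∧
              ∃ π : (Fin d' → ℤ) →ₗ[ℤ] (Fin d → ℤ),
                Function.Surjective π ∧ InNormalFormAt (fun j => (ψ j).comp π) i s ∧
                ∀ j k m, (|(ψ j) (π (Pi.single k 1)) m| : ℝ) ≤ A * L ^ B) := by
  refine ⟨fun ψ i hψ => ?_, ?_⟩
  · obtain ⟨C, hC⟩ := Finite.bddAbove_range fun r : Fin t × Fin d => ‖ψ r.1 (Pi.single r.2 1)‖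
    obtain ⟨π, hπ, hnf, -⟩ := exists_surjective_inNormalFormAt_of_norm_le ψ i hψ
      (le_max_right C 1) fun j p => (hC ⟨(j, p), rfl⟩).trans (le_max_left C 1)
    exact ⟨_, le_rfl, π, hπ, hnf⟩
  refine ⟨(2 * (d + 1)) ^ (3 ^ (t * n) + 1), (3 ^ (t * n) + 1 : ℕ), by positivity, by positivity,
    fun ψ i hψ L hL hψL => ?_⟩
  have hψL' : ∀ j p, ‖ψ j (Pi.single p 1)‖ ≤ L := fun j p =>
    (pi_norm_le_iff_of_nonneg hL.le).2 fun m => by simpa [Int.norm_eq_abs] using hψL j p m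
  obtain ⟨π, hπ, hnf, hπL⟩ := exists_surjective_inNormalFormAt_of_norm_le ψ i hψ
    (le_max_right L 1) fun j p => (hψL' j p).trans (le_max_left L 1)
  refine ⟨_, le_rfl, π, hπ, hnf, fun j κ m => ?_⟩
  rw [Real.rpow_natCast, ← mul_pow, ← Int.norm_eq_abs]
  -- the construction needs `1 ≤ L`; for `L < 1` integrality forces every `ψ j` to vanish
  rcases le_or_gt 1 L with h1 | h1
  · rw [max_eq_left h1] at hπL
    exact (norm_le_pi_norm _ m).trans (hπL j κ)
  · rw [eq_zero_of_norm_apply_single_lt_one (ψ j) fun p => (hψL' j p).trans_lt h1]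
    simp only [LinearMap.zero_apply, Pi.zero_apply, norm_zero]
    positivity
end
end

section
/- Let n ≥ 1 and N ≥ 2 be integers, let B be a finite set, for each β ∈ B let J(β) ⊆ ℤ^n be a bounded box (a product of n integer intervals), and let K : B × ℤ^n → ℂ be any function. Then there exists a group homomorphism ξ : ℤ^n → ℚ/ℤ such that ∑_{β∈B} |∑_{x ∈ [−N,N]^n ∩ ℤ^n} 1_{J(β)}(x)·K(β,x)|² ≪_n (log N)^{2n} · ∑_{β∈B} |∑_{x ∈ [−N,N]^n ∩ ℤ^n} e^{2πi·ξ(x)}·K(β,x)|². -/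
/-!
With `M = 2N + 1` and `ζ = e^{2πi/M}`, the characters `x ↦ ζ^{⟨t, x⟩}`, `t ∈ [-N, N]^n`, form a
Fourier basis for functions on the window `[-N, N]^n`, a set of representatives of `(ℤ/M)^n`.
The Fourier coefficient of an interval at a frequency `t` is a geometric sum of size at most
`1/(|t| + 1)`, so the coefficients of every box are dominated by the single weight
`b(t) = ∏ᵢ 1/(|tᵢ| + 1)`, whose total mass is `≪ (log N)^n`. Weighted Cauchy–Schwarz bounds the
left-hand side by `(∑ b)²` times `∑_β |∑_x ζ^{⟨t,x⟩} K(β,x)|²` for the frequency `t` maximizing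
the latter, and `ξ = t/M` is the required character.
-/

open Finset
open scoped Real

lemma Finset.sum_Icc_zpow {K : Type*} [DivisionRing K] {w : K} (hw : w ≠ 0) (a b : ℤ) :
    ∑ y ∈ Icc a b, w ^ y = w ^ a * ∑ j ∈ range (b + 1 - a).toNat, w ^ j := by
  rw [Int.Icc_eq_finset_map, sum_map, mul_sum]
  exact sum_congr rfl fun j _ => by simp [zpow_add₀ hw]

lemma norm_sum_Icc_zpow_le {K : Type*} [NormedField K] {w : K} (hw : ‖w‖ = 1) (hw1 : w ≠ 1)
    (a b : ℤ) : ‖∑ y ∈ Icc a b, w ^ y‖ ≤ 2 / ‖w - 1‖ := by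
  have hw0 : w ≠ 0 := by rintro rfl; simp at hw
  rw [sum_Icc_zpow hw0, geom_sum_eq hw1, norm_mul, norm_zpow, hw, one_zpow, one_mul, norm_div]
  gcongr
  exact (norm_sub_le _ _).trans (by simp [hw]; norm_num)

lemma IsPrimitiveRoot.sum_Icc_zpow_mul {K : Type*} [Field K] {ζ : K} {M : ℕ}
    (hζ : IsPrimitiveRoot ζ M) {a b : ℤ} (hab : b + 1 - a = M) (k : ℤ) :
    ∑ t ∈ Icc a b, ζ ^ (t * k) = if (M : ℤ) ∣ k then (M : K) else 0 := by
  rcases eq_or_ne M 0 with rfl | hM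
  · simp [Icc_eq_empty_of_lt (show b < a by omega)]
  split_ifs with hk
  · have hone (t : ℤ) : ζ ^ (t * k) = 1 :=
      (hζ.zpow_eq_one_iff_dvd _).2 (dvd_mul_of_dvd_right hk t)
    simp [hone, Int.card_Icc, hab]
  · have hω : ζ ^ k ≠ 1 := fun h => hk ((hζ.zpow_eq_one_iff_dvd k).1 h)
    have hωM : (ζ ^ k) ^ M = 1 := by
      rw [← zpow_natCast, ← zpow_mul, mul_comm, zpow_mul, hζ.zpow_eq_one, one_zpow]
    simp_rw [mul_comm _ k, zpow_mul]
    rw [sum_Icc_zpow (zpow_ne_zero k (hζ.ne_zero hM)), hab, Int.toNat_natCast,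
      geom_sum_eq hω, hωM]
    simp

section Fourier

variable {K ι : Type*} [Field K]

noncomputable def centeredFourierCoeff (ζ : K) (N : ℕ) (f : ℤ → K) (t : ℤ) : K :=
  ((2 * N + 1 : ℕ) : K)⁻¹ * ∑ y ∈ Icc (-N : ℤ) N, f y * ζ ^ (-(t * y))

noncomputable def boxCoeff [Fintype ι] (ζ : K) (N : ℕ) (lo hi : ι → ℤ) (s : ι → ℤ) : K :=
  ∏ i, centeredFourierCoeff ζ N (fun y => if y ∈ Icc (lo i) (hi i) then 1 else 0) (s i)

variable [CharZero K] {ζ : K} {N : ℕ}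

lemma IsPrimitiveRoot.eq_sum_centeredFourierCoeff_mul_zpow (hζ : IsPrimitiveRoot ζ (2 * N + 1))
    (f : ℤ → K) {x : ℤ} (hx : x ∈ Icc (-N : ℤ) N) :
    f x = ∑ t ∈ Icc (-N : ℤ) N, centeredFourierCoeff ζ N f t * ζ ^ (t * x) := by
  have hdvd : ∀ y ∈ Icc (-N : ℤ) N, ((2 * N + 1 : ℕ) : ℤ) ∣ x - y ↔ y = x := by
    intro y hy
    rw [mem_Icc] at hx hy
    refine ⟨fun h => ?_, fun h => by simp [h]⟩
    have := Int.eq_zero_of_abs_lt_dvd h (by rw [abs_lt]; push_cast; omega)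
    omega
  calc f x = ((2 * N + 1 : ℕ) : K)⁻¹ * ∑ y ∈ Icc (-N : ℤ) N,
        f y * if ((2 * N + 1 : ℕ) : ℤ) ∣ x - y then ((2 * N + 1 : ℕ) : K) else 0 := by
        simp_rw [mul_ite, mul_zero]
        rw [sum_congr rfl fun y hy => if_congr (hdvd y hy) rfl rfl, sum_ite_eq' _ _ (f · * _),
          if_pos hx, mul_left_comm, inv_mul_cancel₀ (Nat.cast_ne_zero.2 (by omega)), mul_one]
    _ = ∑ t ∈ Icc (-N : ℤ) N, centeredFourierCoeff ζ N f t * ζ ^ (t * x) := by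
        simp_rw [centeredFourierCoeff, mul_assoc, ← mul_sum, sum_mul, mul_assoc,
          ← zpow_add₀ (hζ.ne_zero (by omega))]
        rw [sum_comm]
        refine congrArg _ (sum_congr rfl fun y _ => ?_)
        rw [← hζ.sum_Icc_zpow_mul (a := -N) (b := N) (by push_cast; ring) (x - y), mul_sum]
        exact sum_congr rfl fun t _ => by ring_nf

variable [Fintype ι] [DecidableEq ι]

lemma IsPrimitiveRoot.ite_mem_Icc_eq_sum_boxCoeff_mul (hζ : IsPrimitiveRoot ζ (2 * N + 1))
    (lo hi : ι → ℤ) {x : ι → ℤ} (hx : x ∈ Fintype.piFinset fun _ => Icc (-N : ℤ) N)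
    [Decidable (x ∈ Set.Icc lo hi)] :
    (if x ∈ Set.Icc lo hi then 1 else 0) = ∑ s ∈ Fintype.piFinset fun _ => Icc (-N : ℤ) N,
      boxCoeff ζ N lo hi s * ∏ i, ζ ^ (s i * x i) := by
  calc (if x ∈ Set.Icc lo hi then 1 else 0)
      = ∏ i, if x i ∈ Icc (lo i) (hi i) then (1 : K) else 0 := by
        rw [prod_ite_zero, prod_const_one]
        simp only [Set.mem_Icc, Pi.le_def, mem_Icc, forall_and, mem_univ, true_implies]
    _ = ∏ i, ∑ s ∈ Icc (-N : ℤ) N, centeredFourierCoeff ζ N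
          (fun y => if y ∈ Icc (lo i) (hi i) then 1 else 0) s * ζ ^ (s * x i) :=
        prod_congr rfl fun i _ => hζ.eq_sum_centeredFourierCoeff_mul_zpow
          (fun y => if y ∈ Icc (lo i) (hi i) then 1 else 0) (Fintype.mem_piFinset.1 hx i)
    _ = _ := by simp_rw [prod_univ_sum, boxCoeff, prod_mul_distrib]

lemma IsPrimitiveRoot.sum_ite_mem_Icc_mul_eq_sum_boxCoeff_mul
    (hζ : IsPrimitiveRoot ζ (2 * N + 1)) (lo hi : ι → ℤ) [DecidablePred (· ∈ Set.Icc lo hi)]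
    (f : (ι → ℤ) → K) :
    ∑ x ∈ Fintype.piFinset (fun _ => Icc (-N : ℤ) N), (if x ∈ Set.Icc lo hi then 1 else 0) * f x =
      ∑ s ∈ Fintype.piFinset fun _ => Icc (-N : ℤ) N, boxCoeff ζ N lo hi s *
        ∑ x ∈ Fintype.piFinset (fun _ => Icc (-N : ℤ) N), (∏ i, ζ ^ (s i * x i)) * f x := by
  simp_rw [mul_sum, ← mul_assoc]
  rw [sum_comm]
  exact sum_congr rfl fun x hx => by rw [hζ.ite_mem_Icc_eq_sum_boxCoeff_mul lo hi hx, sum_mul]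

end Fourier

section Circle

open Complex

lemma le_norm_exp_two_pi_I_div_zpow_sub_one {M : ℕ} {t : ℤ} (ht : 2 * |t| ≤ M) :
    4 * |(t : ℝ)| / M ≤ ‖exp (2 * π * I / M) ^ t - 1‖ := by
  have hsmall : |π * t / M| ≤ π / 2 := by
    rcases eq_or_ne M 0 with rfl | hM
    · simp; positivity
    rw [abs_div, abs_mul, abs_of_pos Real.pi_pos, Nat.abs_cast,
      div_le_div_iff₀ (by positivity) two_pos]
    have : 2 * |(t : ℝ)| ≤ M := by exact_mod_cast ht
    nlinarith [Real.pi_pos]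
  rw [← exp_int_mul, show (t : ℂ) * (2 * π * I / M) = I * ((2 * π * t / M : ℝ) : ℂ) by
    push_cast; ring, norm_exp_I_mul_ofReal_sub_one, norm_mul, Real.norm_two, Real.norm_eq_abs]
  calc 4 * |(t : ℝ)| / M = 2 * (2 / π * |π * t / M|) := by
        rw [abs_div, abs_mul, abs_of_pos Real.pi_pos, Nat.abs_cast]; field_simp; ring
    _ ≤ 2 * |Real.sin (2 * π * t / M / 2)| := by
        rw [show 2 * π * t / M / 2 = π * t / M by ring]
        gcongr
        exact Real.mul_abs_le_abs_sin hsmall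

lemma norm_sum_Icc_exp_zpow_zpow_le {M : ℕ} {t : ℤ} (ht0 : t ≠ 0) (ht : 2 * |t| ≤ M) (a b : ℤ) :
    ‖∑ y ∈ Icc a b, (exp (2 * π * I / M) ^ t) ^ y‖ ≤ M / (2 * |(t : ℝ)|) := by
  have htpos : (0 : ℝ) < |(t : ℝ)| := by positivity
  have hM : M ≠ 0 := by have := Int.one_le_abs ht0; omega
  have hlow := le_norm_exp_two_pi_I_div_zpow_sub_one ht
  have hlow_pos : 0 < 4 * |(t : ℝ)| / M := by positivity
  have hw1 : exp (2 * π * I / M) ^ t ≠ 1 := fun h => by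
    rw [h, sub_self, norm_zero] at hlow
    exact hlow_pos.not_ge hlow
  have hw : ‖exp (2 * π * I / M) ^ t‖ = 1 := by
    rw [norm_zpow, (isPrimitiveRoot_exp M hM).norm'_eq_one hM, one_zpow]
  calc ‖∑ y ∈ Icc a b, (exp (2 * π * I / M) ^ t) ^ y‖
      ≤ 2 / (4 * |(t : ℝ)| / M) := (norm_sum_Icc_zpow_le hw hw1 a b).trans (by gcongr)
    _ = M / (2 * |(t : ℝ)|) := by field_simp; ring

lemma norm_centeredFourierCoeff_indicator_Icc_le (N : ℕ) (a b : ℤ) {t : ℤ} (ht : |t| ≤ N) :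
    ‖centeredFourierCoeff (exp (2 * π * I / (2 * N + 1 : ℕ))) N
        (fun y => if y ∈ Icc a b then 1 else 0) t‖ ≤ (|(t : ℝ)| + 1)⁻¹ := by
  set M := 2 * N + 1
  have hM : M ≠ 0 := by omega
  have hwindow : Icc (-N : ℤ) N ∩ Icc a b = Icc (max (-N : ℤ) a) (min (N : ℤ) b) := by
    ext; simp only [mem_inter, mem_Icc]; omega
  rw [centeredFourierCoeff, norm_mul, norm_inv, Complex.norm_natCast]
  simp_rw [ite_mul, one_mul, zero_mul, sum_ite_mem, hwindow, ← neg_mul, zpow_mul]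
  rcases eq_or_ne t 0 with rfl | ht0
  · have hcard : #(Icc (max (-N : ℤ) a) (min (N : ℤ) b)) ≤ M := by
      rw [← hwindow]
      refine (card_le_card inter_subset_left).trans_eq ?_
      rw [Int.card_Icc]
      omega
    simp only [neg_zero, zpow_zero, one_zpow, sum_const, nsmul_eq_mul, mul_one,
      Complex.norm_natCast, Int.cast_zero, abs_zero, zero_add, inv_one]
    rw [inv_mul_le_iff₀ (by positivity), mul_one]
    exact_mod_cast hcard
  · calc (M : ℝ)⁻¹ * ‖∑ y ∈ Icc (max (-N : ℤ) a) (min (N : ℤ) b),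
          (exp (2 * π * I / M) ^ (-t)) ^ y‖
        ≤ (M : ℝ)⁻¹ * (M / (2 * |((-t : ℤ) : ℝ)|)) := by
          gcongr
          exact norm_sum_Icc_exp_zpow_zpow_le (neg_ne_zero.2 ht0) (by rw [abs_neg]; omega) _ _
      _ = (2 * |(t : ℝ)|)⁻¹ := by push_cast; rw [abs_neg]; field_simp
      _ ≤ (|(t : ℝ)| + 1)⁻¹ := by
          have : (1 : ℝ) ≤ |(t : ℝ)| := by exact_mod_cast Int.one_le_abs ht0
          gcongr
          linarith

lemma norm_boxCoeff_le {ι : Type*} [Fintype ι] [DecidableEq ι] {N : ℕ} (lo hi : ι → ℤ)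
    {s : ι → ℤ} (hs : s ∈ Fintype.piFinset fun _ => Icc (-N : ℤ) N) :
    ‖boxCoeff (exp (2 * π * I / (2 * N + 1 : ℕ))) N lo hi s‖ ≤ ∏ i, (|(s i : ℝ)| + 1)⁻¹ := by
  rw [boxCoeff, norm_prod]
  exact prod_le_prod (fun _ _ => norm_nonneg _) fun i _ =>
    norm_centeredFourierCoeff_indicator_Icc_le N _ _
      (abs_le.2 (mem_Icc.1 (Fintype.mem_piFinset.1 hs i)))

lemma exp_two_pi_I_mul_sum_div_mul_eq_prod_zpow {ι : Type*} [Fintype ι] (M : ℕ) (t x : ι → ℤ) :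
    exp (2 * π * I * ∑ i, ((t i / M : ℚ) : ℂ) * x i) =
      ∏ i, exp (2 * π * I / M) ^ (t i * x i) := by
  simp_rw [← exp_int_mul, ← exp_sum, mul_sum]
  exact congrArg _ (sum_congr rfl fun i _ => by push_cast; ring)

end Circle

lemma sum_Icc_natAbs_le (N : ℕ) {g : ℕ → ℝ} (hg : ∀ k, 0 ≤ g k) :
    ∑ s ∈ Icc (-N : ℤ) N, g s.natAbs ≤ 2 * ∑ k ∈ range (N + 1), g k := by
  rw [← sum_fiberwise_of_maps_to (g := Int.natAbs) (t := range (N + 1))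
    (fun s hs => by rw [mem_Icc] at hs; rw [mem_range]; omega), mul_sum]
  refine sum_le_sum fun k _ => ?_
  rw [sum_congr rfl fun s hs => by rw [(mem_filter.1 hs).2], sum_const, nsmul_eq_mul]
  have hfiber : {s ∈ Icc (-N : ℤ) N | s.natAbs = k} ⊆ {(k : ℤ), -(k : ℤ)} := fun s hs => by
    rw [mem_filter] at hs; simp only [mem_insert, mem_singleton]; omega
  gcongr
  · exact hg k
  · exact_mod_cast (card_le_card hfiber).trans card_le_two

open Real in
lemma sum_Icc_inv_abs_add_one_le {N : ℕ} (hN : 2 ≤ N) :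
    ∑ s ∈ Icc (-N : ℤ) N, (|(s : ℝ)| + 1)⁻¹ ≤ 7 * log N := by
  have hharm : ∑ k ∈ range (N + 1), ((k : ℝ) + 1)⁻¹ ≤ 1 + log (N + 1 : ℕ) := by
    simpa [harmonic] using harmonic_le_one_add_log (N + 1)
  have hN' : (2 : ℝ) ≤ N := by exact_mod_cast hN
  have hlog_succ : log (N + 1 : ℕ) ≤ 2 * log N := by
    rw [← Nat.cast_two, ← log_pow]
    exact log_le_log (by positivity) (by push_cast; nlinarith)
  have hlog_two : 2 / 3 ≤ log N :=
    le_trans (by linarith [log_two_gt_d9]) (log_le_log two_pos hN')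
  calc ∑ s ∈ Icc (-N : ℤ) N, (|(s : ℝ)| + 1)⁻¹
      = ∑ s ∈ Icc (-N : ℤ) N, ((s.natAbs : ℝ) + 1)⁻¹ := by simp [Nat.cast_natAbs]
    _ ≤ 2 * ∑ k ∈ range (N + 1), ((k : ℝ) + 1)⁻¹ :=
        sum_Icc_natAbs_le N (g := fun k => ((k : ℝ) + 1)⁻¹) fun k => by positivity
    _ ≤ 7 * log N := by linarith

lemma sum_piFinset_prod_inv_abs_add_one_le (ι : Type*) [Fintype ι] [DecidableEq ι] {N : ℕ}
    (hN : 2 ≤ N) :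
    ∑ s ∈ Fintype.piFinset (fun _ : ι => Icc (-N : ℤ) N), ∏ i, (|(s i : ℝ)| + 1)⁻¹ ≤
      (7 * Real.log N) ^ Fintype.card ι := by
  rw [← prod_univ_sum (fun _ => Icc (-N : ℤ) N) fun _ s => (|(s : ℝ)| + 1)⁻¹, prod_const,
    card_univ]
  exact pow_le_pow_left₀ (sum_nonneg fun _ _ => by positivity) (sum_Icc_inv_abs_add_one_le hN) _

lemma exists_sum_norm_sq_le_sq_sum_mul {ι B R : Type*} [Fintype B] [SeminormedRing R]
    {T : Finset ι} (hT : T.Nonempty) {b : ι → ℝ} (hb : ∀ t ∈ T, 0 ≤ b t) (c S : B → ι → R)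
    (hc : ∀ β, ∀ t ∈ T, ‖c β t‖ ≤ b t) :
    ∃ t ∈ T, ∑ β, ‖∑ s ∈ T, c β s * S β s‖ ^ 2 ≤ (∑ s ∈ T, b s) ^ 2 * ∑ β, ‖S β t‖ ^ 2 := by
  obtain ⟨t, ht, hmax⟩ := T.exists_max_image (fun s => ∑ β, ‖S β s‖ ^ 2) hT
  refine ⟨t, ht, ?_⟩
  have hcauchy (β : B) :
      ‖∑ s ∈ T, c β s * S β s‖ ^ 2 ≤ (∑ s ∈ T, b s) * ∑ s ∈ T, b s * ‖S β s‖ ^ 2 :=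
    calc ‖∑ s ∈ T, c β s * S β s‖ ^ 2 ≤ (∑ s ∈ T, b s * ‖S β s‖) ^ 2 := by
          gcongr
          refine (norm_sum_le _ _).trans (sum_le_sum fun s hs => (norm_mul_le _ _).trans ?_)
          gcongr
          exact hc β s hs
      _ ≤ (∑ s ∈ T, b s) * ∑ s ∈ T, b s * ‖S β s‖ ^ 2 :=
          sum_sq_le_sum_mul_sum_of_sq_le_mul T hb
            (fun s hs => mul_nonneg (hb s hs) (by positivity)) fun s _ => by ring_nf; rfl
  calc ∑ β, ‖∑ s ∈ T, c β s * S β s‖ ^ 2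
      ≤ ∑ β, (∑ s ∈ T, b s) * ∑ s ∈ T, b s * ‖S β s‖ ^ 2 := sum_le_sum fun β _ => hcauchy β
    _ = (∑ s ∈ T, b s) * ∑ s ∈ T, b s * ∑ β, ‖S β s‖ ^ 2 := by
        simp_rw [← mul_sum, mul_sum]; rw [sum_comm]
    _ ≤ (∑ s ∈ T, b s) * ∑ s ∈ T, b s * ∑ β, ‖S β t‖ ^ 2 :=
        mul_le_mul_of_nonneg_left
          (sum_le_sum fun s hs => mul_le_mul_of_nonneg_left (hmax s hs) (hb s hs)) (sum_nonneg hb)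
    _ = (∑ s ∈ T, b s) ^ 2 * ∑ β, ‖S β t‖ ^ 2 := by rw [← sum_mul, sq, mul_assoc]

open scoped Classical

theorem eliminate_boxes_by_character_general (n : ℕ) :
    ∃ C : ℝ, 0 < C ∧ ∀ N : ℕ, 2 ≤ N →
      ∀ (B : Type) (_ : Fintype B) (lo hi : B → Fin n → ℤ) (Kf : B → (Fin n → ℤ) → ℂ),
        ∃ ξ : Fin n → ℚ,
          (∑ β : B, ‖∑ᶠ x ∈ {x : Fin n → ℤ | ∀ i, |x i| ≤ (N : ℤ)},
              (if x ∈ Set.Icc (lo β) (hi β) then (1 : ℂ) else 0) * Kf β x‖ ^ 2) ≤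
            C * Real.log N ^ (2 * n) *
              ∑ β : B, ‖∑ᶠ x ∈ {x : Fin n → ℤ | ∀ i, |x i| ≤ (N : ℤ)},
                Complex.exp (2 * Real.pi * Complex.I * ∑ i, (ξ i : ℂ) * (x i : ℂ)) * Kf β x‖ ^ 2 := by
  refine ⟨7 ^ (2 * n), by positivity, fun N hN B _ lo hi Kf => ?_⟩
  set ζ := Complex.exp (2 * π * Complex.I / (2 * N + 1 : ℕ))
  set W := Fintype.piFinset fun _ : Fin n => Icc (-N : ℤ) N
  obtain ⟨t, -, hsel⟩ := exists_sum_norm_sq_le_sq_sum_mul ⟨0, by simp⟩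
    (b := fun s => ∏ i, (|(s i : ℝ)| + 1)⁻¹) (fun _ _ => by positivity)
    (fun β => boxCoeff ζ N (lo β) (hi β)) (fun β s => ∑ x ∈ W, (∏ i, ζ ^ (s i * x i)) * Kf β x)
    fun β _ hs => norm_boxCoeff_le _ _ hs
  refine ⟨fun i => t i / (2 * N + 1 : ℕ), ?_⟩
  have hW : {x : Fin n → ℤ | ∀ i, |x i| ≤ (N : ℤ)} = W := by
    ext x
    simp only [W, Set.mem_ofPred_eq, mem_coe, Fintype.mem_piFinset, mem_Icc, abs_le]
  simp only [hW, W, finsum_mem_coe_finset, exp_two_pi_I_mul_sum_div_mul_eq_prod_zpow,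
    (Complex.isPrimitiveRoot_exp _ (by omega)).sum_ite_mem_Icc_mul_eq_sum_boxCoeff_mul]
  calc _ ≤ _ := hsel
    _ ≤ ((7 * Real.log N) ^ n) ^ 2 * ∑ β, ‖∑ x ∈ W, (∏ i, ζ ^ (t i * x i)) * Kf β x‖ ^ 2 := by
        gcongr
        simpa using sum_piFinset_prod_inv_abs_add_one_le (Fin n) hN
    _ = _ := by ring

/-- **Eliminating the characteristic function of boxes** (Proposition B.1 of the paper). -/
theorem eliminate_boxes_by_character (n : ℕ) (hn : 1 ≤ n) :
    ∃ C : ℝ, 0 < C ∧ ∀ N : ℕ, 2 ≤ N →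
      ∀ (B : Type) (_ : Fintype B) (lo hi : B → Fin n → ℤ) (Kf : B → (Fin n → ℤ) → ℂ),
        ∃ ξ : Fin n → ℚ,
          (∑ β : B, ‖∑ᶠ x ∈ {x : Fin n → ℤ | ∀ i, |x i| ≤ (N : ℤ)},
              (if x ∈ Set.Icc (lo β) (hi β) then (1 : ℂ) else 0) * Kf β x‖ ^ 2) ≤
            C * Real.log N ^ (2 * n) *
              ∑ β : B, ‖∑ᶠ x ∈ {x : Fin n → ℤ | ∀ i, |x i| ≤ (N : ℤ)},
                Complex.exp (2 * Real.pi * Complex.I * ∑ i, (ξ i : ℂ) * (x i : ℂ)) * Kf β x‖ ^ 2 :=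
  eliminate_boxes_by_character_general n
end

section
/- Let r_1, r_2 ≥ 0 be integers with r_1 + r_2 ≥ 1, and let N ≥ 2 be a real number. Define Nm : ℝ^{r_1} × ℂ^{r_2} → ℝ by Nm(x, z) = ∏_{i=1}^{r_1} x_i · ∏_{j=1}^{r_2} |z_j|². Then there is a constant C depending only on r_1 and r_2 such that for every a ∈ ℝ the level set S_{≤N}(a) := {(x, z) ∈ [−N,N]^{r_1} × ℂ^{r_2} : |z_j| ≤ N for all j and Nm(x,z) = a}, viewed inside ℝ^{r_1 + 2r_2}, is of Lipschitz class Lip(r_1 + 2r_2, C, C·N). -/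
/-!
Write each real coordinate as a sign times a modulus and each complex coordinate as a modulus
times a point of the unit circle. On the level set the moduli `w ∈ [0, N]^{r₁ + r₂}` satisfy
`∏ wₖ ^ eₖ = |a|` with `eₖ ∈ {1, 2}`. Where `w m` is the smallest modulus it equals
`(|a| / ∏_{k ≠ m} wₖ ^ eₖ) ^ (1 / e m)`, and this is a `2 (r₁ + r₂)`-Lipschitz function of the
other moduli: raising `w j` from `s` to `t` multiplies it by `(s / t) ^ (e j / e m)`, which lowers
it by at most `2 (t - s)` because it is at most `s`. A Lipschitz extension of this function to all
of `ℝ^{r₁ + r₂ - 1}` gives, for each `m` and each choice of signs, a chart parametrised by the other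
moduli and the angles.
-/

open scoped Classical

noncomputable section

/-- A subset `S ⊆ ℝ^D` is of Lipschitz class `Lip(D, Z, L)` if it is covered by the images of
`Z` maps `[0,1]^{D−1} → ℝ^D`, each with Lipschitz constant at most `L`. -/
def LipClass (D Z : ℕ) (L : ℝ) (S : Set (Fin D → ℝ)) : Prop :=
  ∃ φ : Fin Z → ((Fin (D - 1) → ℝ) → (Fin D → ℝ)),
    (∀ i, LipschitzOnWith (Real.toNNReal L) (φ i) (Set.Icc 0 1)) ∧
    S ⊆ ⋃ i, φ i '' Set.Icc 0 1

open Set Function Real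
open scoped NNReal

theorem mul_one_sub_div_rpow_le {s t β c : ℝ} (hs : 0 < s) (hst : s ≤ t) (hβ : 0 ≤ β)
    (hβc : β ≤ c) (hc : 1 ≤ c) : s * (1 - (s / t) ^ β) ≤ c * (t - s) := by
  have ht : 0 < t := hs.trans_le hst
  have hρ0 : 0 < s / t := div_pos hs ht
  have hρ1 : s / t ≤ 1 := (div_le_one ht).2 hst
  -- `s / t ≤ (s / t) ^ β` for `β ≤ 1`, and Bernoulli's inequality for `β ≥ 1`
  have hbern : 1 - (s / t) ^ β ≤ c * (1 - s / t) := by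
    rcases le_total β 1 with hβ1 | hβ1
    · have := Real.rpow_le_rpow_of_exponent_ge hρ0 hρ1 hβ1
      rw [Real.rpow_one] at this
      nlinarith
    · have := one_add_mul_self_le_rpow_one_add (s := s / t - 1) (by linarith) hβ1
      rw [add_sub_cancel] at this
      nlinarith
  calc s * (1 - (s / t) ^ β) ≤ s * (c * (1 - s / t)) := by gcongr
    _ = c * (t - s) * (s / t) := by field_simp
    _ ≤ c * (t - s) := mul_le_of_le_one_right (by nlinarith) hρ1

section InvMonomial

variable {ι : Type*} [Fintype ι]

def invMonomial (B : ℝ) (β : ι → ℝ) (y : ι → ℝ) : ℝ := B / ∏ i, y i ^ β i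

def invMonomialDomain (B : ℝ) (β : ι → ℝ) : Set (ι → ℝ) :=
  {y | ∀ i, 0 < y i ∧ invMonomial B β y ≤ y i}

variable [DecidableEq ι] {B c : ℝ} {β : ι → ℝ}

theorem invMonomial_update {y : ι → ℝ} (hy : ∀ i, 0 < y i) (j : ι) {t : ℝ} (ht : 0 < t) :
    invMonomial B β (update y j t) = invMonomial B β y * (y j / t) ^ β j := by
  have hrest : ∏ i ∈ {j}ᶜ, update y j t i ^ β i = ∏ i ∈ {j}ᶜ, y i ^ β i :=
    Finset.prod_congr rfl fun i hi => by
      rw [update_of_ne (by simpa using hi)]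
  have hQ : 0 < ∏ i ∈ {j}ᶜ, y i ^ β i :=
    Finset.prod_pos fun i _ => Real.rpow_pos_of_pos (hy i) _
  have hs : 0 < y j ^ β j := Real.rpow_pos_of_pos (hy j) _
  have ht' : 0 < t ^ β j := Real.rpow_pos_of_pos ht _
  simp only [invMonomial]
  rw [Fintype.prod_eq_mul_prod_compl j, Fintype.prod_eq_mul_prod_compl j, hrest, update_self,
    Real.div_rpow (hy j).le ht.le]
  field_simp

variable (hB : 0 ≤ B) (hβ : ∀ i, 0 ≤ β i ∧ β i ≤ c) (hc : 1 ≤ c)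
include hB hβ hc

theorem invMonomial_update_le {y : ι → ℝ} (hy : y ∈ invMonomialDomain B β) (j : ι) {t : ℝ}
    (ht : y j ≤ t) :
    update y j t ∈ invMonomialDomain B β ∧
      invMonomial B β (update y j t) ≤ invMonomial B β y ∧
      invMonomial B β y - invMonomial B β (update y j t) ≤ c * (t - y j) := by
  have hpos : ∀ i, 0 < y i := fun i => (hy i).1
  have ht0 : 0 < t := (hpos j).trans_le ht
  have hf0 : 0 ≤ invMonomial B β y :=
    div_nonneg hB (Finset.prod_nonneg fun i _ => (Real.rpow_pos_of_pos (hpos i) _).le)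
  have hρ0 : 0 ≤ (y j / t) ^ β j := Real.rpow_nonneg (div_pos (hpos j) ht0).le _
  have hρ1 : (y j / t) ^ β j ≤ 1 :=
    Real.rpow_le_one (div_pos (hpos j) ht0).le ((div_le_one ht0).2 ht) (hβ j).1
  rw [invMonomial_update hpos j ht0]
  have hle : invMonomial B β y * (y j / t) ^ β j ≤ invMonomial B β y :=
    mul_le_of_le_one_right hf0 hρ1
  refine ⟨fun i => ?_, hle, ?_⟩
  · rw [invMonomial_update hpos j ht0]
    rcases eq_or_ne i j with rfl | hij
    · simp only [update_self]
      exact ⟨ht0, hle.trans ((hy i).2.trans ht)⟩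
    · simp only [update_of_ne hij]
      exact ⟨hpos i, hle.trans (hy i).2⟩
  · calc invMonomial B β y - invMonomial B β y * (y j / t) ^ β j
        = invMonomial B β y * (1 - (y j / t) ^ β j) := by ring
      _ ≤ y j * (1 - (y j / t) ^ β j) := mul_le_mul_of_nonneg_right (hy j).2 (by linarith)
      _ ≤ c * (t - y j) := mul_one_sub_div_rpow_le (hpos j) ht (hβ j).1 (hβ j).2 hc

theorem invMonomial_sub_le_of_le {y z : ι → ℝ} (hy : y ∈ invMonomialDomain B β) (hyz : y ≤ z) :
    z ∈ invMonomialDomain B β ∧ invMonomial B β z ≤ invMonomial B β y ∧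
      invMonomial B β y - invMonomial B β z ≤ c * ∑ i, (z i - y i) := by
  suffices ∀ s : Finset ι, s.piecewise z y ∈ invMonomialDomain B β ∧
      invMonomial B β (s.piecewise z y) ≤ invMonomial B β y ∧
      invMonomial B β y - invMonomial B β (s.piecewise z y) ≤ c * ∑ i ∈ s, (z i - y i) by
    simpa using this Finset.univ
  intro s
  induction s using Finset.induction_on with
  | empty => simpa using hy
  | insert j s hj ih =>
    obtain ⟨hmem, hle, hsub⟩ := ih
    have hjy : s.piecewise z y j = y j := s.piecewise_eq_of_notMem _ _ hj
    obtain ⟨hmem', hle', hsub'⟩ :=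
      invMonomial_update_le hB hβ hc hmem j (t := z j) (hjy ▸ hyz j)
    rw [Finset.piecewise_insert, Finset.sum_insert hj]
    rw [hjy] at hsub'
    exact ⟨hmem', hle'.trans hle, by linarith⟩

theorem lipschitzOnWith_invMonomial :
    LipschitzOnWith (c.toNNReal * Fintype.card ι) (invMonomial B β) (invMonomialDomain B β) := by
  refine LipschitzOnWith.of_dist_le_mul fun u hu v hv => ?_
  -- `u` and `v` both rise to `u ⊔ v`, and `invMonomial` falls at rate at most `c` on the way.
  have hmax : ∀ {u v : ι → ℝ}, u ∈ invMonomialDomain B β → v ∈ invMonomialDomain B β →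
      invMonomial B β u - invMonomial B β v ≤ c * Fintype.card ι * dist u v := by
    intro u v hu hv
    obtain ⟨-, -, hsub⟩ := invMonomial_sub_le_of_le hB hβ hc hu (le_sup_left : u ≤ u ⊔ v)
    obtain ⟨-, hle, -⟩ := invMonomial_sub_le_of_le hB hβ hc hv (le_sup_right : v ≤ u ⊔ v)
    have hsum : ∑ i, ((u ⊔ v) i - u i) ≤ Fintype.card ι * dist u v := by
      refine (Finset.sum_le_card_nsmul Finset.univ _ (dist u v) fun i _ => ?_).trans_eq (by simp)
      calc (u ⊔ v) i - u i ≤ |u i - v i| := by simp only [Pi.sup_apply]; grind [abs_sub_comm]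
        _ ≤ dist u v := by rw [← Real.dist_eq]; exact dist_le_pi_dist u v i
    nlinarith
  rw [Real.dist_eq, abs_sub_le_iff, NNReal.coe_mul, Real.coe_toNNReal _ (by linarith),
    NNReal.coe_natCast]
  exact ⟨hmax hu hv, dist_comm u v ▸ hmax hv hu⟩

end InvMonomial

section LevelSolve

variable {κ : Type*} [Fintype κ] [DecidableEq κ] {e : κ → ℝ}

theorem invMonomial_subtype_ne_eq {w : κ → ℝ} (hw : ∀ k, 0 < w k) (he : ∀ k, e k ≠ 0) (m : κ) :
    invMonomial ((∏ k, w k ^ e k) ^ (e m)⁻¹) (fun k : {k // k ≠ m} => e k / e m)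
      (fun k => w k) = w m := by
  have hrest : 0 < ∏ k : {k // k ≠ m}, w k ^ e k :=
    Finset.prod_pos fun k _ => Real.rpow_pos_of_pos (hw k) _
  have hroot : ∏ k : {k // k ≠ m}, w k ^ (e k / e m) =
      (∏ k : {k // k ≠ m}, w k ^ e k) ^ (e m)⁻¹ := by
    rw [← Real.finsetProd_rpow _ (fun k : {k // k ≠ m} => w k ^ e k)
      fun k _ => (Real.rpow_pos_of_pos (hw k) _).le]
    exact Finset.prod_congr rfl fun k _ => by rw [div_eq_mul_inv, Real.rpow_mul (hw k).le]
  rw [invMonomial, Fintype.prod_eq_mul_prod_subtype_ne _ m,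
    Real.mul_rpow (Real.rpow_pos_of_pos (hw m) _).le hrest.le, Real.rpow_rpow_inv (hw m).le (he m),
    hroot, mul_div_cancel_right₀ _ (Real.rpow_pos_of_pos hrest _).ne']

theorem exists_lipschitz_solve_of_min (he : ∀ k, 0 < e k) {c : ℝ} (hc : 1 ≤ c)
    (hec : ∀ j k, e j ≤ c * e k) (A : ℝ) :
    ∃ g : (m : κ) → ({k // k ≠ m} → ℝ) → ℝ,
      (∀ m, LipschitzWith (c.toNNReal * Fintype.card κ) (g m)) ∧
      ∀ w : κ → ℝ, (∀ k, 0 ≤ w k) → ∏ k, w k ^ e k = A →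
        ∀ m, (∀ k, w m ≤ w k) → g m (fun k => w k) = w m := by
  by_cases hA : 0 < A
  swap
  · refine ⟨fun _ _ => 0, fun _ => LipschitzWith.const' 0, fun w hw hprod m hmin => ?_⟩
    have hprod0 : ∏ k, w k ^ e k = 0 :=
      le_antisymm (hprod ▸ not_lt.1 hA) (Finset.prod_nonneg fun k _ => Real.rpow_nonneg (hw k) _)
    obtain ⟨k, -, hk⟩ := Finset.prod_eq_zero_iff.1 hprod0
    have hk0 : w k = 0 := (Real.rpow_eq_zero (hw k) (he k).ne').1 hk
    linarith [hmin k, hw m]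
  have hβ : ∀ m (k : {k // k ≠ m}), 0 ≤ e k / e m ∧ e k / e m ≤ c := fun m k =>
    ⟨div_nonneg (he k).le (he m).le, (div_le_iff₀ (he m)).2 (hec k m)⟩
  choose g hg hfg using fun m => (lipschitzOnWith_invMonomial (Real.rpow_nonneg hA.le (e m)⁻¹)
    (hβ m) hc).extend_real
  refine ⟨g, fun m => (hg m).weaken ?_, fun w hw hprod m hmin => ?_⟩
  · gcongr
    exact Fintype.card_subtype_le _
  have hwpos : ∀ k, 0 < w k := fun k => (hw k).lt_of_ne' fun hk0 =>
    hA.ne' (hprod ▸ Finset.prod_eq_zero (Finset.mem_univ k)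
      (by rw [hk0, Real.zero_rpow (he k).ne']))
  have hsolve := hprod ▸ invMonomial_subtype_ne_eq hwpos (fun k => (he k).ne') m
  rw [← hfg m fun k => ⟨hwpos k, hsolve ▸ hmin k⟩, hsolve]

end LevelSolve

theorem comp_mem_Icc_zero_one {α β : Type*} {p : α → ℝ} (hp : p ∈ Icc 0 1) (f : β → α) :
    p ∘ f ∈ Icc 0 1 :=
  ⟨fun _ => hp.1 _, fun _ => hp.2 _⟩

theorem dist_comp_right_le {α β X : Type*} [Fintype α] [Fintype β] [PseudoMetricSpace X]
    (p q : α → X) (f : β → α) : dist (p ∘ f) (q ∘ f) ≤ dist p q :=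
  (dist_pi_le_iff dist_nonneg).2 fun b => dist_le_pi_dist p q (f b)

theorem lipClass_of_cover {κ T : Type*} [Fintype κ] [Fintype T] [Nonempty T] {ι : T → Type*}
    [∀ t, Fintype (ι t)] {D Z : ℕ} {L : ℝ} {S : Set (Fin D → ℝ)} {S' : Set (κ → ℝ)}
    (E : κ ≃ Fin D) (hι : ∀ t, Fintype.card (ι t) = D - 1) (hZ : Fintype.card T ≤ Z)
    (φ : ∀ t, (ι t → ℝ) → κ → ℝ) (hφ : ∀ t, LipschitzOnWith L.toNNReal (φ t) (Icc 0 1))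
    (hS' : S' ⊆ ⋃ t, φ t '' Icc 0 1) (hS : ∀ v ∈ S, v ∘ E ∈ S') : LipClass D Z L S := by
  obtain ⟨f⟩ : Nonempty (T ↪ Fin Z) := Function.Embedding.nonempty_of_card_le (by simpa using hZ)
  have hsurj : Surjective (invFun f) := invFun_surjective f.injective
  let P t : Fin (D - 1) ≃ ι t := Fintype.equivOfCardEq (by simp [hι])
  refine ⟨fun i p => φ (invFun f i) (p ∘ (P _).symm) ∘ E.symm, fun i => ?_, fun v hv => ?_⟩
  · refine LipschitzOnWith.of_dist_le_mul fun p hp q hq => ?_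
    calc _ ≤ dist (φ (invFun f i) (p ∘ (P _).symm)) (φ (invFun f i) (q ∘ (P _).symm)) :=
          dist_comp_right_le _ _ _
      _ ≤ L.toNNReal * dist (p ∘ (P _).symm) (q ∘ (P _).symm) :=
          (hφ _).dist_le_mul _ (comp_mem_Icc_zero_one hp _) _ (comp_mem_Icc_zero_one hq _)
      _ ≤ L.toNNReal * dist p q := by gcongr; exact dist_comp_right_le _ _ _
  · obtain ⟨t, q, hq, hqv⟩ : ∃ t, ∃ q ∈ Icc 0 1, φ t q = v ∘ E := by simpa using hS' (hS v hv)
    obtain ⟨i, rfl⟩ := hsurj t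
    refine mem_iUnion.2 ⟨i, q ∘ P _, comp_mem_Icc_zero_one hq _, ?_⟩
    ext
    simp [comp_assoc, hqv]

section Moduli

variable {κ : Type*} [DecidableEq κ]

-- Clamping to `[0, N]` changes nothing on the level set and keeps the moduli bounded off it.
def solvedModuli (N : ℝ) (m : κ) (g : ({k // k ≠ m} → ℝ) → ℝ) (p : {k // k ≠ m} → ℝ) :
    κ → ℝ :=
  fun k => if hk : k = m then max 0 (min (g (N • p)) N) else N * p ⟨k, hk⟩

variable {N : ℝ} {m : κ} {g : ({k // k ≠ m} → ℝ) → ℝ}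

theorem abs_solvedModuli_le (hN : 0 ≤ N) {p : {k // k ≠ m} → ℝ} (hp : p ∈ Icc 0 1) (k : κ) :
    |solvedModuli N m g p k| ≤ N := by
  unfold solvedModuli
  split_ifs with hk
  · exact abs_le.2 ⟨by linarith [le_max_left 0 (min (g (N • p)) N)],
      max_le hN (min_le_right _ _)⟩
  · have h0 : 0 ≤ p ⟨k, hk⟩ := hp.1 _
    have h1 : p ⟨k, hk⟩ ≤ 1 := hp.2 _
    exact abs_le.2 ⟨by nlinarith, by nlinarith⟩

theorem dist_solvedModuli_le [Fintype κ] (hN : 0 ≤ N) {K : ℝ≥0} (hK : 1 ≤ K)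
    (hg : LipschitzWith K g) (p q : {k // k ≠ m} → ℝ) :
    dist (solvedModuli N m g p) (solvedModuli N m g q) ≤ K * N * dist p q := by
  have hscale : dist (N • p) (N • q) = N * dist p q := by
    rw [dist_smul₀, Real.norm_of_nonneg hN]
  refine (dist_pi_le_iff (by positivity)).2 fun k => ?_
  unfold solvedModuli
  split_ifs with hk
  · calc _ ≤ K * dist (N • p) (N • q) := ((hg.min_const N).const_max 0).dist_le_mul _ _
      _ = K * N * dist p q := by rw [hscale, mul_assoc]
  · calc dist (N * p ⟨k, hk⟩) (N * q ⟨k, hk⟩) = N * dist (p ⟨k, hk⟩) (q ⟨k, hk⟩) := by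
          rw [Real.dist_eq, Real.dist_eq, ← mul_sub, abs_mul, abs_of_nonneg hN]
      _ ≤ 1 * N * dist p q := by rw [one_mul]; gcongr; exact dist_le_pi_dist p q _
      _ ≤ K * N * dist p q := by gcongr; exact_mod_cast hK

theorem solvedModuli_div (hN : 0 < N) {w : κ → ℝ} (hw : ∀ k, 0 ≤ w k ∧ w k ≤ N)
    (hg : g (fun k => w k) = w m) : solvedModuli N m g (fun k => w k / N) = w := by
  have hscale : (N • fun k : {k // k ≠ m} => w k / N) = fun k : {k // k ≠ m} => w k := by
    ext k; simp [mul_div_cancel₀ _ hN.ne']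
  ext k
  unfold solvedModuli
  split_ifs with hk
  · subst hk
    rw [hscale, hg, min_eq_left (hw k).2, max_eq_right (hw k).1]
  · exact mul_div_cancel₀ _ hN.ne'

end Moduli

section Polar

variable {r₁ r₂ : ℕ}

-- The shift by `π` matches the range `(-π, π]` of `Complex.arg`.
def circlePoint (t : ℝ) : Fin 2 → ℝ := ![cos (2 * π * t - π), sin (2 * π * t - π)]

theorem abs_circlePoint_le_one (t : ℝ) (b : Fin 2) : |circlePoint t b| ≤ 1 := by
  fin_cases b
  · exact abs_cos_le_one _
  · exact abs_sin_le_one _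

theorem abs_circlePoint_sub_le (t s : ℝ) (b : Fin 2) :
    |circlePoint t b - circlePoint s b| ≤ 2 * π * |t - s| := by
  have harg : |(2 * π * t - π) - (2 * π * s - π)| = 2 * π * |t - s| := by
    rw [show (2 * π * t - π) - (2 * π * s - π) = 2 * π * (t - s) by ring, abs_mul,
      abs_of_pos two_pi_pos]
  fin_cases b
  · exact harg ▸ abs_cos_sub_cos_le _ _
  · exact harg ▸ abs_sin_sub_sin_le _ _

-- `(j, 0)` and `(j, 1)` index the real and imaginary part of the `j`-th complex coordinate.
def polarLift (σ : Fin r₁ → Bool) (R : Fin r₁ ⊕ Fin r₂ → ℝ) (θ : Fin r₂ → ℝ) :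
    Fin r₁ ⊕ Fin r₂ × Fin 2 → ℝ
  | .inl i => (if σ i then 1 else -1) * R (.inl i)
  | .inr (j, b) => R (.inr j) * circlePoint (θ j) b

theorem dist_polarLift_le {N : ℝ} (hN : 0 ≤ N) (σ : Fin r₁ → Bool) {R R' : Fin r₁ ⊕ Fin r₂ → ℝ}
    (hR' : ∀ k, |R' k| ≤ N) (θ θ' : Fin r₂ → ℝ) :
    dist (polarLift σ R θ) (polarLift σ R' θ') ≤ dist R R' + 2 * π * N * dist θ θ' := by
  have hθ : 0 ≤ 2 * π * N * dist θ θ' := by positivity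
  refine (dist_pi_le_iff (by positivity)).2 ?_
  rintro (i | ⟨j, b⟩)
  · have hsign : |(if σ i then 1 else -1 : ℝ)| = 1 := by split_ifs <;> simp
    calc dist (polarLift σ R θ (.inl i)) (polarLift σ R' θ' (.inl i))
        = dist (R (.inl i)) (R' (.inl i)) := by
          simp only [polarLift, Real.dist_eq, ← mul_sub, abs_mul, hsign, one_mul]
      _ ≤ dist R R' + 2 * π * N * dist θ θ' :=
          (dist_le_pi_dist R R' _).trans (le_add_of_nonneg_right hθ)
  · have hR := dist_le_pi_dist R R' (.inr j)
    have hθj := dist_le_pi_dist θ θ' j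
    rw [Real.dist_eq] at hR hθj ⊢
    calc |polarLift σ R θ (.inr (j, b)) - polarLift σ R' θ' (.inr (j, b))|
        = |(R (.inr j) - R' (.inr j)) * circlePoint (θ j) b +
            R' (.inr j) * (circlePoint (θ j) b - circlePoint (θ' j) b)| := by
          simp only [polarLift]; ring_nf
      _ ≤ |R (.inr j) - R' (.inr j)| * 1 + N * (2 * π * |θ j - θ' j|) := by
          refine (abs_add_le _ _).trans ?_
          rw [abs_mul, abs_mul]
          gcongr
          exacts [abs_circlePoint_le_one _ _, hR' _, abs_circlePoint_sub_le _ _ _]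
      _ = |R (.inr j) - R' (.inr j)| + 2 * π * N * |θ j - θ' j| := by ring
      _ ≤ dist R R' + 2 * π * N * dist θ θ' := by gcongr

end Polar

section NormLevelSet

variable {r₁ r₂ : ℕ}

def normLevelSet (r₁ r₂ : ℕ) (N a : ℝ) : Set (Fin r₁ ⊕ Fin r₂ × Fin 2 → ℝ) :=
  {x | (∀ i, |x (.inl i)| ≤ N) ∧ (∀ j, x (.inr (j, 0)) ^ 2 + x (.inr (j, 1)) ^ 2 ≤ N ^ 2) ∧
    (∏ i, x (.inl i)) * ∏ j, (x (.inr (j, 0)) ^ 2 + x (.inr (j, 1)) ^ 2) = a}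

def normExponent : Fin r₁ ⊕ Fin r₂ → ℝ := Sum.elim (fun _ => 1) fun _ => 2

theorem normExponent_pos : ∀ k : Fin r₁ ⊕ Fin r₂, 0 < normExponent k := by
  rintro (_ | _) <;> norm_num [normExponent]

theorem normExponent_le_two_mul :
    ∀ j k : Fin r₁ ⊕ Fin r₂, normExponent j ≤ 2 * normExponent k := by
  rintro (_ | _) (_ | _) <;> norm_num [normExponent]

def complexCoord (x : Fin r₁ ⊕ Fin r₂ × Fin 2 → ℝ) (j : Fin r₂) : ℂ :=
  ⟨x (.inr (j, 0)), x (.inr (j, 1))⟩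

def modulus (x : Fin r₁ ⊕ Fin r₂ × Fin 2 → ℝ) : Fin r₁ ⊕ Fin r₂ → ℝ :=
  Sum.elim (fun i => |x (.inl i)|) fun j => ‖complexCoord x j‖

def signs (x : Fin r₁ ⊕ Fin r₂ × Fin 2 → ℝ) (i : Fin r₁) : Bool := decide (0 ≤ x (.inl i))

def angles (x : Fin r₁ ⊕ Fin r₂ × Fin 2 → ℝ) (j : Fin r₂) : ℝ :=
  (Complex.arg (complexCoord x j) + π) / (2 * π)

theorem sq_norm_complexCoord (x : Fin r₁ ⊕ Fin r₂ × Fin 2 → ℝ) (j : Fin r₂) :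
    ‖complexCoord x j‖ ^ 2 = x (.inr (j, 0)) ^ 2 + x (.inr (j, 1)) ^ 2 := by
  rw [Complex.sq_norm, complexCoord, Complex.normSq_mk]
  ring

theorem angles_mem_Icc (x : Fin r₁ ⊕ Fin r₂ × Fin 2 → ℝ) : angles x ∈ Icc 0 1 := by
  refine ⟨fun j => ?_, fun j => ?_⟩ <;> simp only [angles, Pi.zero_apply, Pi.one_apply]
  · exact div_nonneg (by linarith [Complex.neg_pi_lt_arg (complexCoord x j)]) two_pi_pos.le
  · rw [div_le_one two_pi_pos]
    linarith [Complex.arg_le_pi (complexCoord x j)]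

theorem polarLift_modulus (x : Fin r₁ ⊕ Fin r₂ × Fin 2 → ℝ) :
    polarLift (signs x) (modulus x) (angles x) = x := by
  ext (i | ⟨j, b⟩)
  · by_cases hx : 0 ≤ x (.inl i)
    · simp [polarLift, signs, modulus, hx, abs_of_nonneg hx]
    · simp [polarLift, signs, modulus, hx, abs_of_neg (not_le.1 hx)]
  · have hangle : 2 * π * angles x j - π = Complex.arg (complexCoord x j) := by
      simp only [angles]
      field_simp
      ring
    fin_cases b
    · simp [polarLift, modulus, circlePoint, hangle, Complex.norm_mul_cos_arg, complexCoord]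
    · simp [polarLift, modulus, circlePoint, hangle, Complex.norm_mul_sin_arg, complexCoord]

theorem modulus_mem_Icc {N a : ℝ} (hN : 0 ≤ N) {x : Fin r₁ ⊕ Fin r₂ × Fin 2 → ℝ}
    (hx : x ∈ normLevelSet r₁ r₂ N a) (k : Fin r₁ ⊕ Fin r₂) : modulus x k ∈ Icc 0 N := by
  rcases k with i | j
  · exact ⟨abs_nonneg _, hx.1 i⟩
  · refine ⟨norm_nonneg _, (pow_le_pow_iff_left₀ (norm_nonneg _) hN two_ne_zero).1 ?_⟩
    exact (sq_norm_complexCoord x j).trans_le (hx.2.1 j)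

theorem prod_modulus_rpow_normExponent {N a : ℝ} {x : Fin r₁ ⊕ Fin r₂ × Fin 2 → ℝ}
    (hx : x ∈ normLevelSet r₁ r₂ N a) : ∏ k, modulus x k ^ normExponent k = |a| := by
  rw [← hx.2.2, abs_mul, Finset.abs_prod,
    abs_of_nonneg (Finset.prod_nonneg fun j _ => by positivity)]
  simp [Fintype.prod_sum_type, modulus, normExponent, sq_norm_complexCoord]

end NormLevelSet

section NormChart

variable {r₁ r₂ : ℕ} {N : ℝ}

def normChart (N : ℝ) (m : Fin r₁ ⊕ Fin r₂) (σ : Fin r₁ → Bool) (g : ({k // k ≠ m} → ℝ) → ℝ)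
    (p : {k // k ≠ m} ⊕ Fin r₂ → ℝ) : Fin r₁ ⊕ Fin r₂ × Fin 2 → ℝ :=
  polarLift σ (solvedModuli N m g (p ∘ Sum.inl)) (p ∘ Sum.inr)

theorem lipschitzOnWith_normChart {m : Fin r₁ ⊕ Fin r₂} {g : ({k // k ≠ m} → ℝ) → ℝ}
    (hN : 0 ≤ N) (σ : Fin r₁ → Bool) {K : ℝ≥0} (hK : 1 ≤ K) (hg : LipschitzWith K g) :
    LipschitzOnWith ((K + 2 * π) * N).toNNReal (normChart N m σ g) (Icc 0 1) := by
  refine LipschitzOnWith.of_dist_le_mul fun p _ q hq => ?_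
  rw [Real.coe_toNNReal _ (by positivity)]
  calc _ ≤ dist (solvedModuli N m g (p ∘ Sum.inl)) (solvedModuli N m g (q ∘ Sum.inl)) +
        2 * π * N * dist (p ∘ Sum.inr) (q ∘ Sum.inr) :=
        dist_polarLift_le hN σ (abs_solvedModuli_le hN (comp_mem_Icc_zero_one hq _)) _ _
    _ ≤ K * N * dist p q + 2 * π * N * dist p q := by
        gcongr
        · exact (dist_solvedModuli_le hN hK hg _ _).trans
            (by gcongr; exact dist_comp_right_le _ _ _)
        · exact dist_comp_right_le _ _ _
    _ = (K + 2 * π) * N * dist p q := by ring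

theorem normLevelSet_subset_iUnion_normChart [Nonempty (Fin r₁ ⊕ Fin r₂)] {a : ℝ} (hN : 0 < N)
    {g : (m : Fin r₁ ⊕ Fin r₂) → ({k // k ≠ m} → ℝ) → ℝ}
    (hg : ∀ w : Fin r₁ ⊕ Fin r₂ → ℝ, (∀ k, 0 ≤ w k) → ∏ k, w k ^ normExponent k = |a| →
      ∀ m, (∀ k, w m ≤ w k) → g m (fun k => w k) = w m) :
    normLevelSet r₁ r₂ N a ⊆
      ⋃ t : (Fin r₁ ⊕ Fin r₂) × (Fin r₁ → Bool), normChart N t.1 t.2 (g t.1) '' Icc 0 1 := by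
  intro x hx
  have hmod := modulus_mem_Icc hN.le hx
  obtain ⟨m, -, hmin⟩ := Finset.exists_min_image Finset.univ (modulus x) Finset.univ_nonempty
  have hsolve := hg (modulus x) (fun k => (hmod k).1) (prod_modulus_rpow_normExponent hx) m
    fun k => hmin k (Finset.mem_univ k)
  refine mem_iUnion.2 ⟨(m, signs x), Sum.elim (fun k => modulus x k / N) (angles x),
    ⟨?_, ?_⟩, ?_⟩
  · rintro (k | j)
    · exact div_nonneg (hmod k).1 hN.le
    · exact (angles_mem_Icc x).1 j
  · rintro (k | j)
    · exact (div_le_one hN).2 (hmod k).2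
    · exact (angles_mem_Icc x).2 j
  · rw [normChart, Sum.elim_comp_inl, Sum.elim_comp_inr, solvedModuli_div hN hmod hsolve,
      polarLift_modulus]

end NormChart

def coordEquiv (r₁ r₂ : ℕ) : Fin r₁ ⊕ Fin r₂ × Fin 2 ≃ Fin (r₁ + 2 * r₂) :=
  (Equiv.sumCongr (Equiv.refl _) (finProdFinEquiv.trans (finCongr (mul_comm r₂ 2)))).trans
    finSumFinEquiv

theorem coordEquiv_inl {r₁ r₂ : ℕ} (i : Fin r₁) :
    coordEquiv r₁ r₂ (.inl i) = ⟨i, by omega⟩ := rfl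

theorem coordEquiv_inr_zero {r₁ r₂ : ℕ} (j : Fin r₂) :
    coordEquiv r₁ r₂ (.inr (j, 0)) = ⟨r₁ + 2 * j, by omega⟩ := by
  ext; simp [coordEquiv, finProdFinEquiv]

theorem coordEquiv_inr_one {r₁ r₂ : ℕ} (j : Fin r₂) :
    coordEquiv r₁ r₂ (.inr (j, 1)) = ⟨r₁ + 2 * j + 1, by omega⟩ := by
  ext; simp [coordEquiv, finProdFinEquiv]; ring

theorem exists_normCharts {r₁ r₂ : ℕ} [Nonempty (Fin r₁ ⊕ Fin r₂)] {N : ℝ} (hN : 0 < N) (a : ℝ) :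
    ∃ φ : (t : (Fin r₁ ⊕ Fin r₂) × (Fin r₁ → Bool)) → ({k // k ≠ t.1} ⊕ Fin r₂ → ℝ) →
        Fin r₁ ⊕ Fin r₂ × Fin 2 → ℝ,
      (∀ t, LipschitzOnWith ((2 * (r₁ + r₂) + 2 * π) * N).toNNReal (φ t) (Icc 0 1)) ∧
      normLevelSet r₁ r₂ N a ⊆ ⋃ t, φ t '' Icc 0 1 := by
  obtain ⟨g, hg, hsolve⟩ := exists_lipschitz_solve_of_min normExponent_pos one_le_two
    normExponent_le_two_mul |a|
  have hK : (2 : ℝ).toNNReal * Fintype.card (Fin r₁ ⊕ Fin r₂) = 2 * (r₁ + r₂ : ℝ≥0) := by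
    simp
  have hK1 : (1 : ℝ≥0) ≤ 2 * (r₁ + r₂ : ℝ≥0) := by
    have := Fintype.card_pos (α := Fin r₁ ⊕ Fin r₂)
    rw [Fintype.card_sum, Fintype.card_fin, Fintype.card_fin] at this
    norm_cast
    omega
  refine ⟨fun t => normChart N t.1 t.2 (g t.1), fun t => ?_,
    normLevelSet_subset_iUnion_normChart hN hsolve⟩
  simpa using lipschitzOnWith_normChart hN.le t.2 hK1 (hK ▸ hg t.1)

/-- **Level sets of the norm form are Lipschitz** (Lemma F.3 of the paper).
Coordinates: the first `r₁` coordinates are the real coordinates `x_i`; the complex coordinate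
`z_j` corresponds to the pair of coordinates `(r₁ + 2j, r₁ + 2j + 1)`. -/
theorem norm_level_set_lipschitz (r₁ r₂ : ℕ) (h : 1 ≤ r₁ + r₂) :
    ∃ C : ℕ, 0 < C ∧ ∀ N : ℝ, 2 ≤ N → ∀ a : ℝ,
      LipClass (r₁ + 2 * r₂) C ((C : ℝ) * N)
        {v : Fin (r₁ + 2 * r₂) → ℝ |
          (∀ i : Fin r₁, |v ⟨i.val, by have := i.isLt; omega⟩| ≤ N) ∧
          (∀ j : Fin r₂,
            v ⟨r₁ + 2 * j.val, by have := j.isLt; omega⟩ ^ 2 +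
              v ⟨r₁ + 2 * j.val + 1, by have := j.isLt; omega⟩ ^ 2 ≤ N ^ 2) ∧
          (∏ i : Fin r₁, v ⟨i.val, by have := i.isLt; omega⟩) *
              ∏ j : Fin r₂,
                (v ⟨r₁ + 2 * j.val, by have := j.isLt; omega⟩ ^ 2 +
                  v ⟨r₁ + 2 * j.val + 1, by have := j.isLt; omega⟩ ^ 2) = a} := by
  have : Nonempty (Fin r₁ ⊕ Fin r₂) := ⟨finSumFinEquiv.symm ⟨0, h⟩⟩
  refine ⟨(r₁ + r₂) * 2 ^ r₁ * (2 * (r₁ + r₂) + 7), by positivity, fun N hN a => ?_⟩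
  obtain ⟨φ, hφ, hcover⟩ := exists_normCharts (r₁ := r₁) (r₂ := r₂) (by linarith : (0 : ℝ) < N) a
  refine lipClass_of_cover (coordEquiv r₁ r₂) (fun _ => ?_) ?_ φ (fun t => (hφ t).weaken ?_)
    hcover ?_
  · simp [Fintype.card_subtype_compl]
    omega
  · simpa [Fintype.card_pi] using Nat.le_mul_of_pos_right _ (by omega)
  · refine Real.toNNReal_le_toNNReal (mul_le_mul_of_nonneg_right ?_ (by linarith))
    have hcharts : (1 : ℝ) ≤ (r₁ + r₂) * 2 ^ r₁ := by
      exact_mod_cast Nat.one_le_iff_ne_zero.2 (by positivity)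
    push_cast
    nlinarith [pi_lt_d2]
  · intro v hv
    simpa only [normLevelSet, mem_ofPred_eq, comp_apply, coordEquiv_inl, coordEquiv_inr_zero,
      coordEquiv_inr_one] using hv

end
end
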